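/- arXiv:math/0008100 — 5 statements merged into one kernel-verified Lean document; each statement's English description precedes it below -/
import Mathlib

section
/- Let n ≥ 2. Every maximal collection of pairwise weakly separated 2-element subsets of {1,…,n} has cardinality exactly 2(n−2) + 1. -/
/-- `X ≺ Y`: every element of `X` is less than every element of `Y`. -/
def Prec (X Y : Finset ℕ) : Prop := ∀ x ∈ X, ∀ y ∈ Y, x < y

/-- Two finite subsets `I, J` of `{1,…,n}` are weakly separated: either
`|I| ≥ |J|` and `J∖I` is partitioned as `J₁ ⊔ J₂` with `J₁ ≺ I∖J ≺ J₂`, or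
symmetrically with `I` and `J` interchanged. -/
def WeaklySeparated (I J : Finset ℕ) : Prop :=
  (J.card ≤ I.card ∧ ∃ J₁ J₂ : Finset ℕ, Disjoint J₁ J₂ ∧ J₁ ∪ J₂ = J \ I ∧
      Prec J₁ (I \ J) ∧ Prec (I \ J) J₂) ∨
  (I.card ≤ J.card ∧ ∃ I₁ I₂ : Finset ℕ, Disjoint I₁ I₂ ∧ I₁ ∪ I₂ = I \ J ∧
      Prec I₁ (J \ I) ∧ Prec (J \ I) I₂)

/-- `I` is a `k`-element subset of `{1,…,n}`. -/
def IsKSubset (n k : ℕ) (I : Finset ℕ) : Prop := I ⊆ Finset.Icc 1 n ∧ I.card = k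

/-- `𝒞` is a maximal collection of pairwise weakly separated `k`-subsets of `{1,…,n}`:
every member is a `k`-subset of `{1,…,n}`, any two members are weakly separated, and
any `k`-subset of `{1,…,n}` weakly separated from all members already belongs to `𝒞`. -/
def MaximalWS (n k : ℕ) (𝒞 : Finset (Finset ℕ)) : Prop :=
  (∀ I ∈ 𝒞, IsKSubset n k I) ∧
  (∀ I ∈ 𝒞, ∀ J ∈ 𝒞, WeaklySeparated I J) ∧
  (∀ J, IsKSubset n k J → (∀ I ∈ 𝒞, WeaklySeparated I J) → J ∈ 𝒞)

lemma pair_rep (I : Finset ℕ) (h : I.card = 2) : ∃ a b : ℕ, a < b ∧ I = {a, b} := by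
  obtain ⟨x, y, hxy, rfl⟩ := Finset.card_eq_two.mp h
  rcases lt_or_gt_of_ne hxy with h' | h'
  · exact ⟨x, y, h', rfl⟩
  · exact ⟨y, x, h', Finset.pair_comm x y⟩

lemma ws_symm {I J : Finset ℕ} (h : WeaklySeparated I J) : WeaklySeparated J I := by
  rcases h with h | h
  · exact Or.inr h
  · exact Or.inl h

lemma no_cross {a b c d : ℕ} (hab : a < b) (_hcd : c < d)
    (h : WeaklySeparated {a, b} {c, d}) : ¬ (a < c ∧ c < b ∧ b < d) := by
  rintro ⟨h1, h2, h3⟩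
  have hc : c ∈ ({c, d} : Finset ℕ) \ {a, b} := by simp; omega
  have hb : b ∈ ({a, b} : Finset ℕ) \ {c, d} := by simp; omega
  have ha : a ∈ ({a, b} : Finset ℕ) \ {c, d} := by simp; omega
  have hd : d ∈ ({c, d} : Finset ℕ) \ {a, b} := by simp; omega
  rcases h with ⟨-, J₁, J₂, -, hun, hp1, hp2⟩ | ⟨-, I₁, I₂, -, hun, hp1, hp2⟩
  · have : c ∈ J₁ ∪ J₂ := by rw [hun]; exact hc
    rcases Finset.mem_union.mp this with h' | h'
    · exact absurd (hp1 c h' a ha) (by omega)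
    · exact absurd (hp2 b hb c h') (by omega)
  · have : b ∈ I₁ ∪ I₂ := by rw [hun]; exact hb
    rcases Finset.mem_union.mp this with h' | h'
    · exact absurd (hp1 b h' c hc) (by omega)
    · exact absurd (hp2 d hd b h') (by omega)

lemma ws_mk {a b c d : ℕ} (hab : a < b) (hcd : c < d)
    (h1 : ¬ (a < c ∧ c < b ∧ b < d)) (h2 : ¬ (c < a ∧ a < d ∧ d < b)) :
    WeaklySeparated {a, b} {c, d} := by
  have hcard : ({c, d} : Finset ℕ).card ≤ ({a, b} : Finset ℕ).card := by
    rw [Finset.card_pair hab.ne, Finset.card_pair hcd.ne]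
  have hcard' : ({a, b} : Finset ℕ).card ≤ ({c, d} : Finset ℕ).card := by
    rw [Finset.card_pair hab.ne, Finset.card_pair hcd.ne]
  by_cases h3 : a < c ∧ d < b
  · refine Or.inr ⟨hcard', (({a,b} : Finset ℕ) \ {c,d}).filter (fun x => x < c),
      (({a,b} : Finset ℕ) \ {c,d}).filter (fun x => ¬ x < c),
      Finset.disjoint_filter_filter_not _ _ _, Finset.filter_union_filter_not_eq _ _, ?_, ?_⟩
    · intro x hx y hy
      simp only [Finset.mem_filter, Finset.mem_sdiff, Finset.mem_insert,
        Finset.mem_singleton] at hx hy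
      omega
    · intro x hx y hy
      simp only [Finset.mem_filter, Finset.mem_sdiff, Finset.mem_insert,
        Finset.mem_singleton] at hx hy
      omega
  · refine Or.inl ⟨hcard,
      (({c,d} : Finset ℕ) \ {a,b}).filter (fun x => x < a ∨ (x < b ∧ (a = c ∨ a = d))),
      (({c,d} : Finset ℕ) \ {a,b}).filter (fun x => ¬ (x < a ∨ (x < b ∧ (a = c ∨ a = d)))),
      Finset.disjoint_filter_filter_not _ _ _, Finset.filter_union_filter_not_eq _ _, ?_, ?_⟩
    · intro x hx y hy
      simp only [Finset.mem_filter, Finset.mem_sdiff, Finset.mem_insert,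
        Finset.mem_singleton] at hx hy
      omega
    · intro x hx y hy
      simp only [Finset.mem_filter, Finset.mem_sdiff, Finset.mem_insert,
        Finset.mem_singleton] at hx hy
      omega

/-- Maximal pairwise weakly separated family of 2-subsets of `Icc l r`. -/
def MaxWS' (l r : ℕ) (𝒞 : Finset (Finset ℕ)) : Prop :=
  (∀ I ∈ 𝒞, I ⊆ Finset.Icc l r ∧ I.card = 2) ∧
  (∀ I ∈ 𝒞, ∀ J ∈ 𝒞, WeaklySeparated I J) ∧
  (∀ J, J ⊆ Finset.Icc l r → J.card = 2 → (∀ I ∈ 𝒞, WeaklySeparated I J) → J ∈ 𝒞)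

def psi (r a : ℕ) : ℕ → ℕ := fun x => if x = r then a + 1 else x
def sig (r a : ℕ) : ℕ → ℕ := fun x => if x = a + 1 then r else x

lemma psi_lt {r a : ℕ} (h : a + 1 < r) {u v : ℕ} (hu : u = r ∨ u ≤ a) (hv : v = r ∨ v ≤ a) :
    psi r a u < psi r a v ↔ u < v := by
  unfold psi; split_ifs <;> omega

lemma sig_psi {r a : ℕ} (h : a + 1 < r) {u : ℕ} (hu : u = r ∨ u ≤ a) :
    sig r a (psi r a u) = u := by
  unfold psi sig; split_ifs <;> omega

lemma psi_low {r a u : ℕ} (h : u ≤ a) (h2 : a + 1 < r) : psi r a u = u := by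
  unfold psi; rw [if_neg]; omega

lemma psi_top {r a : ℕ} : psi r a r = a + 1 := by unfold psi; rw [if_pos rfl]

lemma pair_image (f : ℕ → ℕ) (x y : ℕ) : ({x, y} : Finset ℕ).image f = {f x, f y} := by
  simp

lemma forced_mem {l r : ℕ} {𝒞 : Finset (Finset ℕ)} (h : MaxWS' l r 𝒞) {u v : ℕ}
    (huv : u < v) (hu : l ≤ u) (hv : v ≤ r)
    (hgood : ∀ x y : ℕ, l ≤ x → x < y → y ≤ r →
      ¬ (x < u ∧ u < y ∧ y < v) ∧ ¬ (u < x ∧ x < v ∧ v < y)) :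
    {u, v} ∈ 𝒞 := by
  obtain ⟨hsub, _hpair, hmax⟩ := h
  have hsub' : ({u, v} : Finset ℕ) ⊆ Finset.Icc l r := by
    intro z hz
    simp only [Finset.mem_insert, Finset.mem_singleton] at hz
    simp only [Finset.mem_Icc]
    omega
  apply hmax _ hsub' (Finset.card_pair huv.ne)
  intro I hI
  obtain ⟨x, y, hxy, rfl⟩ := pair_rep I (hsub I hI).2
  have hbx := (hsub _ hI).1 (Finset.mem_insert_self x {y})
  have hby := (hsub _ hI).1 (Finset.mem_insert_of_mem (Finset.mem_singleton_self y))
  simp only [Finset.mem_Icc] at hbx hby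
  exact ws_mk hxy huv (hgood x y hbx.1 hxy hby.2).1 (hgood x y hbx.1 hxy hby.2).2

lemma gen (m : ℕ) : ∀ l 𝒞, 1 ≤ m → MaxWS' l (l + m) 𝒞 → 𝒞.card = 2 * m - 1 := by
  induction m using Nat.strong_induction_on with
  | _ m ih =>
  intro l 𝒞 hm hC
  obtain ⟨hsub, hpair, hmax⟩ := hC
  have hC' : MaxWS' l (l + m) 𝒞 := ⟨hsub, hpair, hmax⟩
  have hlr : {l, l + m} ∈ 𝒞 :=
    forced_mem hC' (by omega) le_rfl le_rfl (fun x y hx hxy hy => by omega)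
  rcases Nat.lt_or_ge m 2 with hm1 | hm2
  · -- base case m = 1
    have hm1' : m = 1 := by omega
    subst hm1'
    have hsingle : 𝒞 = {{l, l + 1}} := by
      apply Finset.eq_singleton_iff_unique_mem.mpr
      refine ⟨hlr, ?_⟩
      intro I hI
      obtain ⟨x, y, hxy, rfl⟩ := pair_rep I (hsub I hI).2
      have hbx := (hsub _ hI).1 (Finset.mem_insert_self x {y})
      have hby := (hsub _ hI).1 (Finset.mem_insert_of_mem (Finset.mem_singleton_self y))
      simp only [Finset.mem_Icc] at hbx hby
      have hxl : x = l ∧ y = l + 1 := by omega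
      rw [hxl.1, hxl.2]
    rw [hsingle]
    simp
  · obtain ⟨k, rfl⟩ : ∃ k, m = k + 2 := ⟨m - 2, by omega⟩
    have hshape : ∀ e ∈ 𝒞, ∃ x y : ℕ, x < y ∧ l ≤ x ∧ y ≤ l + (k + 2) ∧ e = {x, y} := by
      intro e he
      obtain ⟨x, y, hxy, rfl⟩ := pair_rep e (hsub e he).2
      have hbx := (hsub _ he).1 (Finset.mem_insert_self x {y})
      have hby := (hsub _ he).1 (Finset.mem_insert_of_mem (Finset.mem_singleton_self y))
      simp only [Finset.mem_Icc] at hbx hby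
      exact ⟨x, y, hxy, hbx.1, hby.2, rfl⟩
    have hr1 : {l + k + 1, l + (k + 2)} ∈ 𝒞 :=
      forced_mem hC' (by omega) (by omega) (by omega) (fun x y hx hxy hy => by omega)
    by_cases hfan : ∃ c, l < c ∧ c + 1 < l + (k + 2) ∧ {c, l + (k + 2)} ∈ 𝒞
    · -- main case: split at a
      obtain ⟨a, hla, har, haC⟩ := hfan
      set r := l + (k + 2) with hrdef
      obtain ⟨t, ht2, htlt, hrt⟩ : ∃ t, 2 ≤ t ∧ t < k + 2 ∧ r = a + t := ⟨r - a, by omega⟩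
      obtain ⟨s, hs, hslt⟩ : ∃ s, a = l + s + 1 ∧ s + 2 < k + 2 := ⟨a - l - 1, by omega, by omega⟩
      set A := 𝒞.filter (fun e => e ⊆ Finset.Icc a r) with hAdef
      set B := 𝒞.filter (fun e => e ⊆ insert r (Finset.Icc l a)) with hBdef
      have hcov : ∀ e ∈ 𝒞, e ∈ A ∨ e ∈ B := by
        intro e he
        obtain ⟨x, y, hxy, hx, hy, rfl⟩ := hshape e he
        by_cases hxa : a ≤ x
        · left
          refine Finset.mem_filter.mpr ⟨he, ?_⟩
          intro z hz
          simp only [Finset.mem_insert, Finset.mem_singleton] at hz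
          simp only [Finset.mem_Icc]
          omega
        · have hyr : y ≤ a ∨ y = r := by
            by_contra h'
            push_neg at h'
            have hnc := no_cross hxy (show a < r by omega) (hpair _ he _ haC)
            omega
          right
          refine Finset.mem_filter.mpr ⟨he, ?_⟩
          intro z hz
          simp only [Finset.mem_insert, Finset.mem_singleton] at hz
          simp only [Finset.mem_insert, Finset.mem_Icc]
          omega
      have hint : A ∩ B = {{a, r}} := by
        ext e
        simp only [Finset.mem_inter, Finset.mem_singleton]
        constructor
        · rintro ⟨heA, heB⟩
          have heA' := (Finset.mem_filter.mp heA).2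
          have heB' := (Finset.mem_filter.mp heB).2
          have he𝒞 := (Finset.mem_filter.mp heA).1
          have hsub2 : e ⊆ {a, r} := by
            intro z hz
            have h1 := heA' hz
            have h2 := heB' hz
            simp only [Finset.mem_Icc] at h1
            simp only [Finset.mem_insert, Finset.mem_Icc] at h2
            simp only [Finset.mem_insert, Finset.mem_singleton]
            omega
          apply Finset.eq_of_subset_of_card_le hsub2
          rw [(hsub e he𝒞).2, Finset.card_pair (show a ≠ r by omega)]
        · rintro rfl
          constructor
          · refine Finset.mem_filter.mpr ⟨haC, ?_⟩
            intro z hz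
            simp only [Finset.mem_insert, Finset.mem_singleton] at hz
            simp only [Finset.mem_Icc]
            omega
          · refine Finset.mem_filter.mpr ⟨haC, ?_⟩
            intro z hz
            simp only [Finset.mem_insert, Finset.mem_singleton] at hz
            simp only [Finset.mem_insert, Finset.mem_Icc]
            omega
      have hBshape : ∀ e ∈ B, ∃ x y : ℕ, x < y ∧ l ≤ x ∧ x ≤ a ∧ (y = r ∨ y ≤ a) ∧ e = {x, y} := by
        intro e he
        have he𝒞 := (Finset.mem_filter.mp he).1
        have hesub := (Finset.mem_filter.mp he).2
        obtain ⟨x, y, hxy, hx, hy, rfl⟩ := hshape e he𝒞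
        have h1 := hesub (Finset.mem_insert_self x {y})
        have h2 := hesub (Finset.mem_insert_of_mem (Finset.mem_singleton_self y))
        simp only [Finset.mem_insert, Finset.mem_Icc] at h1 h2
        exact ⟨x, y, hxy, hx, by omega, by omega, rfl⟩
      have hAshape : ∀ e ∈ A, ∃ x y : ℕ, x < y ∧ a ≤ x ∧ y ≤ r ∧ e = {x, y} := by
        intro e he
        have he𝒞 := (Finset.mem_filter.mp he).1
        have hesub := (Finset.mem_filter.mp he).2
        obtain ⟨x, y, hxy, hx, hy, rfl⟩ := hshape e he𝒞
        have h1 := hesub (Finset.mem_insert_self x {y})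
        have h2 := hesub (Finset.mem_insert_of_mem (Finset.mem_singleton_self y))
        simp only [Finset.mem_Icc] at h1 h2
        exact ⟨x, y, hxy, h1.1, h2.2, rfl⟩
      have hAmax : MaxWS' a r A := by
        refine ⟨?_, fun I hI J hJ =>
          hpair I (Finset.filter_subset _ _ hI) J (Finset.filter_subset _ _ hJ), ?_⟩
        · intro I hI
          exact ⟨(Finset.mem_filter.mp hI).2, (hsub I (Finset.filter_subset _ _ hI)).2⟩
        · intro J hJsub hJcard hall
          have hJ𝒞 : J ∈ 𝒞 := by
            apply hmax J (hJsub.trans (Finset.Icc_subset_Icc (by omega) le_rfl)) hJcard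
            intro I hI
            rcases hcov I hI with hIA | hIB
            · exact hall I hIA
            · obtain ⟨x, y, hxy, hx, hxa, hy, rfl⟩ := hBshape I hIB
              obtain ⟨c, d, hcd, rfl⟩ := pair_rep J hJcard
              have hc := hJsub (Finset.mem_insert_self c {d})
              have hd := hJsub (Finset.mem_insert_of_mem (Finset.mem_singleton_self d))
              simp only [Finset.mem_Icc] at hc hd
              exact ws_mk hxy hcd (by omega) (by omega)
          exact Finset.mem_filter.mpr ⟨hJ𝒞, hJsub⟩
      have hAcard : A.card = 2 * t - 1 := ih t htlt a A (by omega) (hrt ▸ hAmax)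
      set B' := B.image (fun e => e.image (psi r a)) with hB'def
      have hpsir : a + 1 < r := by omega
      have himg : ∀ x y : ℕ, ({x, y} : Finset ℕ).image (psi r a) = {psi r a x, psi r a y} :=
        pair_image _
      have hB'max : MaxWS' l (a + 1) B' := by
        refine ⟨?_, ?_, ?_⟩
        · intro I' hI'
          obtain ⟨e, he, rfl⟩ := Finset.mem_image.mp hI'
          obtain ⟨x, y, hxy, hx, hxa, hy, rfl⟩ := hBshape e he
          rw [himg]
          have hlt : psi r a x < psi r a y := (psi_lt hpsir (Or.inr hxa) hy).mpr hxy
          have hpx : psi r a x = x := psi_low hxa hpsir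
          constructor
          · intro z hz
            simp only [Finset.mem_insert, Finset.mem_singleton] at hz
            simp only [Finset.mem_Icc]
            rcases hy with rfl | hy'
            · rw [hpx, psi_top] at hz; omega
            · rw [hpx, psi_low hy' hpsir] at hz; omega
          · exact Finset.card_pair hlt.ne
        · intro I' hI' J' hJ'
          obtain ⟨e, he, rfl⟩ := Finset.mem_image.mp hI'
          obtain ⟨f, hf, rfl⟩ := Finset.mem_image.mp hJ'
          obtain ⟨x, y, hxy, hx, hxa, hy, rfl⟩ := hBshape e he
          obtain ⟨c, d, hcd, hc, hca, hd, rfl⟩ := hBshape f hf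
          rw [himg, himg]
          have nc1 := no_cross hxy hcd
            (hpair _ (Finset.filter_subset _ _ he) _ (Finset.filter_subset _ _ hf))
          have nc2 := no_cross hcd hxy
            (hpair _ (Finset.filter_subset _ _ hf) _ (Finset.filter_subset _ _ he))
          apply ws_mk ((psi_lt hpsir (Or.inr hxa) hy).mpr hxy)
            ((psi_lt hpsir (Or.inr hca) hd).mpr hcd)
          · rw [psi_lt hpsir (Or.inr hxa) (Or.inr hca), psi_lt hpsir (Or.inr hca) hy,
              psi_lt hpsir hy hd]
            exact nc1
          · rw [psi_lt hpsir (Or.inr hca) (Or.inr hxa), psi_lt hpsir (Or.inr hxa) hd,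
              psi_lt hpsir hd hy]
            exact nc2
        · intro J' hJ'sub hJ'card hall'
          obtain ⟨c, d', hcd', rfl⟩ := pair_rep J' hJ'card
          have hc := hJ'sub (Finset.mem_insert_self c {d'})
          have hd' := hJ'sub (Finset.mem_insert_of_mem (Finset.mem_singleton_self d'))
          simp only [Finset.mem_Icc] at hc hd'
          have hca : c ≤ a := by omega
          obtain ⟨d, hcd2, hdG, hψd⟩ : ∃ d, c < d ∧ (d = r ∨ d ≤ a) ∧ psi r a d = d' := by
            by_cases hd1 : d' = a + 1
            · exact ⟨r, by omega, Or.inl rfl, by rw [psi_top, hd1]⟩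
            · exact ⟨d', by omega, Or.inr (by omega), psi_low (by omega) hpsir⟩
          have hψc : psi r a c = c := psi_low hca hpsir
          have hJmem : {c, d} ∈ 𝒞 := by
            have hsubJ : ({c, d} : Finset ℕ) ⊆ Finset.Icc l r := by
              intro z hz
              simp only [Finset.mem_insert, Finset.mem_singleton] at hz
              simp only [Finset.mem_Icc]
              omega
            apply hmax _ hsubJ (Finset.card_pair hcd2.ne)
            intro I hI
            rcases hcov I hI with hIA | hIB
            · obtain ⟨x, y, hxy, hxa2, hy2, rfl⟩ := hAshape I hIA
              exact ws_mk hxy hcd2 (by omega) (by omega)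
            · obtain ⟨x, y, hxy, hx, hxa2, hy2, rfl⟩ := hBshape I hIB
              have hmem' : ({x, y} : Finset ℕ).image (psi r a) ∈ B' :=
                Finset.mem_image_of_mem _ hIB
              have hws' := hall' _ hmem'
              rw [himg] at hws'
              rw [← hψc, ← hψd] at hws'
              have nc1 := no_cross ((psi_lt hpsir (Or.inr hxa2) hy2).mpr hxy)
                ((psi_lt hpsir (Or.inr hca) hdG).mpr hcd2) hws'
              have nc2 := no_cross ((psi_lt hpsir (Or.inr hca) hdG).mpr hcd2)
                ((psi_lt hpsir (Or.inr hxa2) hy2).mpr hxy) (ws_symm hws')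
              rw [psi_lt hpsir (Or.inr hxa2) (Or.inr hca), psi_lt hpsir (Or.inr hca) hy2,
                psi_lt hpsir hy2 hdG] at nc1
              rw [psi_lt hpsir (Or.inr hca) (Or.inr hxa2), psi_lt hpsir (Or.inr hxa2) hdG,
                psi_lt hpsir hdG hy2] at nc2
              exact ws_mk hxy hcd2 nc1 nc2
          have hJB : {c, d} ∈ B := by
            refine Finset.mem_filter.mpr ⟨hJmem, ?_⟩
            intro z hz
            simp only [Finset.mem_insert, Finset.mem_singleton] at hz
            simp only [Finset.mem_insert, Finset.mem_Icc]
            omega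
          refine Finset.mem_image.mpr ⟨{c, d}, hJB, ?_⟩
          rw [himg, hψc, hψd]
      have ha1 : a + 1 = l + (s + 2) := by omega
      have hB'card : B'.card = 2 * (s + 2) - 1 :=
        ih (s + 2) hslt l B' (by omega) (ha1 ▸ hB'max)
      have hBB' : B'.card = B.card := by
        rw [hB'def]
        apply Finset.card_image_of_injOn
        intro e he f hf heq
        have hinv : ∀ g ∈ B, (g.image (psi r a)).image (sig r a) = g := by
          intro g hg
          obtain ⟨x, y, hxy, hx, hxa, hy, rfl⟩ := hBshape g hg
          rw [himg, pair_image, sig_psi hpsir (Or.inr hxa), sig_psi hpsir hy]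
        have h' := congrArg (fun u : Finset ℕ => u.image (sig r a)) heq
        simp only at h'
        rwa [hinv e (Finset.mem_coe.mp he), hinv f (Finset.mem_coe.mp hf)] at h'
      have hunion : A ∪ B = 𝒞 := by
        apply Finset.Subset.antisymm
        · exact Finset.union_subset (Finset.filter_subset _ _) (Finset.filter_subset _ _)
        · intro e he
          exact Finset.mem_union.mpr (hcov e he)
      have hcount := Finset.card_union_add_card_inter A B
      rw [hunion, hint] at hcount
      simp only [Finset.card_singleton] at hcount
      omega
    · -- fan-free case
      push_neg at hfan
      have hedge : ∀ e ∈ 𝒞, l + (k + 2) ∈ e →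
          e = {l, l + (k + 2)} ∨ e = {l + k + 1, l + (k + 2)} := by
        intro e he hre
        obtain ⟨x, y, hxy, hx, hy, rfl⟩ := hshape e he
        simp only [Finset.mem_insert, Finset.mem_singleton] at hre
        have hyr : y = l + (k + 2) := by omega
        subst hyr
        have hx' : x = l ∨ x = l + k + 1 := by
          by_contra h'
          push_neg at h'
          exact hfan x (by omega) (by omega) he
        rcases hx' with rfl | rfl
        · exact Or.inl rfl
        · exact Or.inr rfl
      set B := 𝒞.filter (fun e => l + (k + 2) ∉ e) with hBdef
      have hBsub : B ⊆ 𝒞 := Finset.filter_subset _ _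
      have hBmax : MaxWS' l (l + (k + 1)) B := by
        refine ⟨?_, fun I hI J hJ => hpair I (hBsub hI) J (hBsub hJ), ?_⟩
        · intro I hI
          have hI𝒞 := hBsub hI
          have hrI : l + (k + 2) ∉ I := (Finset.mem_filter.mp hI).2
          refine ⟨?_, (hsub I hI𝒞).2⟩
          intro z hz
          have hz' := (hsub I hI𝒞).1 hz
          simp only [Finset.mem_Icc] at hz' ⊢
          have hzne : z ≠ l + (k + 2) := fun h => hrI (h ▸ hz)
          omega
        · intro J hJsub hJcard hall
          have hJ𝒞 : J ∈ 𝒞 := by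
            apply hmax J (hJsub.trans (Finset.Icc_subset_Icc le_rfl (by omega))) hJcard
            intro I hI
            by_cases hrI : l + (k + 2) ∈ I
            · obtain ⟨c, d, hcd, rfl⟩ := pair_rep J hJcard
              have hc := hJsub (Finset.mem_insert_self c {d})
              have hd := hJsub (Finset.mem_insert_of_mem (Finset.mem_singleton_self d))
              simp only [Finset.mem_Icc] at hc hd
              rcases hedge I hI hrI with rfl | rfl
              · exact ws_mk (by omega) hcd (by omega) (by omega)
              · exact ws_mk (by omega) hcd (by omega) (by omega)
            · exact hall I (Finset.mem_filter.mpr ⟨hI, hrI⟩)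
          have hrJ : l + (k + 2) ∉ J := by
            intro h
            have := hJsub h
            simp only [Finset.mem_Icc] at this
            omega
          exact Finset.mem_filter.mpr ⟨hJ𝒞, hrJ⟩
      have hBcard := ih (k + 1) (by omega) l B (by omega) hBmax
      have hsplit : 𝒞.filter (fun e => l + (k + 2) ∈ e) =
          {{l, l + (k + 2)}, {l + k + 1, l + (k + 2)}} := by
        ext e
        simp only [Finset.mem_filter, Finset.mem_insert, Finset.mem_singleton]
        constructor
        · rintro ⟨he, hre⟩
          exact hedge e he hre
        · rintro (rfl | rfl)
          · exact ⟨hlr, by simp⟩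
          · exact ⟨hr1, by simp⟩
      have hcards := Finset.card_filter_add_card_filter_not
        (s := 𝒞) (p := fun e => l + (k + 2) ∈ e)
      have hne : ({l, l + (k + 2)} : Finset ℕ) ≠ {l + k + 1, l + (k + 2)} := by
        intro h
        have hmem : l ∈ ({l + k + 1, l + (k + 2)} : Finset ℕ) := h ▸ Finset.mem_insert_self _ _
        simp only [Finset.mem_insert, Finset.mem_singleton] at hmem
        omega
      have h2' : (𝒞.filter (fun e => l + (k + 2) ∈ e)).card = 2 := by
        rw [hsplit]
        exact Finset.card_pair hne
      have hBeq : (𝒞.filter (fun e => ¬ l + (k + 2) ∈ e)).card = B.card := rfl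
      omega

/-- **Purity for `k = 2`.** Every maximal collection of pairwise weakly separated
`2`-subsets of `{1,…,n}` has cardinality `2(n−2) + 1`. -/
theorem purity_k2 (n : ℕ) (hn : 2 ≤ n) (𝒞 : Finset (Finset ℕ))
    (h𝒞 : MaximalWS n 2 𝒞) :
    𝒞.card = 2 * (n - 2) + 1 := by
  obtain ⟨h1, h2, h3⟩ := h𝒞
  have h' : MaxWS' 1 n 𝒞 := ⟨fun I hI => h1 I hI, h2, fun J hs hc hws => h3 J ⟨hs, hc⟩ hws⟩
  obtain ⟨m, rfl⟩ : ∃ m, n = 1 + m := ⟨n - 1, by omega⟩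
  have := gen m 1 𝒞 (by omega) h'
  omega
end

section
/- Let n ≥ 2. The number of maximal collections of pairwise weakly separated 2-element subsets of {1,…,n} equals the Catalan number C_{n−2} = (1/(n−1))·binomial(2n−4, n−2). -/
namespace WSAux

/-- non-crossing condition for pairs `{a,b}`, `{c,d}` with `a<b`, `c<d`. -/
def NC (a b c d : ℕ) : Prop := ¬(a < c ∧ c < b ∧ b < d) ∧ ¬(c < a ∧ a < d ∧ d < b)

lemma ws_symm {I J : Finset ℕ} (h : WeaklySeparated I J) : WeaklySeparated J I :=
  h.elim (fun ⟨h1, h2⟩ => Or.inr ⟨h1, h2⟩) (fun ⟨h1, h2⟩ => Or.inl ⟨h1, h2⟩)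

lemma card_pair' {a b : ℕ} (h : a < b) : ({a, b} : Finset ℕ).card = 2 :=
  Finset.card_pair h.ne

lemma not_ws_cross1 {a b c d : ℕ} (hcr : a < c ∧ c < b ∧ b < d) :
    ¬ WeaklySeparated {a, b} {c, d} := by
  obtain ⟨h1, h2, h3⟩ := hcr
  have hIJ : ({a, b} : Finset ℕ) \ {c, d} = {a, b} := by
    ext x; simp; omega
  have hJI : ({c, d} : Finset ℕ) \ {a, b} = {c, d} := by
    ext x; simp; omega
  rintro (⟨-, J₁, J₂, hdisj, hun, hp1, hp2⟩ | ⟨-, I₁, I₂, hdisj, hun, hp1, hp2⟩)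
  · rw [hJI] at hun; rw [hIJ] at hp1 hp2
    have hc : c ∈ J₁ ∪ J₂ := by rw [hun]; simp
    rcases Finset.mem_union.1 hc with hc | hc
    · have := hp1 c hc a (by simp); omega
    · have := hp2 b (by simp) c hc; omega
  · rw [hIJ] at hun; rw [hJI] at hp1 hp2
    have hb : b ∈ I₁ ∪ I₂ := by rw [hun]; simp
    rcases Finset.mem_union.1 hb with hb | hb
    · have := hp1 b hb c (by simp); omega
    · have := hp2 d (by simp) b hb; omega

lemma ws_pair_iff {a b c d : ℕ} (hab : a < b) (hcd : c < d) :
    WeaklySeparated {a, b} {c, d} ↔ NC a b c d := by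
  constructor
  · intro h
    constructor
    · intro hcr; exact not_ws_cross1 hcr h
    · intro hcr; exact not_ws_cross1 hcr (ws_symm h)
  · rintro ⟨h1, h2⟩
    have hcard : ({c, d} : Finset ℕ).card ≤ ({a, b} : Finset ℕ).card := by
      rw [card_pair' hab, card_pair' hcd]
    have hcard' : ({a, b} : Finset ℕ).card ≤ ({c, d} : Finset ℕ).card := by
      rw [card_pair' hab, card_pair' hcd]
    by_cases hbc : b ≤ c
    · refine Or.inl ⟨hcard, ∅, ({c, d} : Finset ℕ) \ {a, b}, by simp, by simp,
        by intro x hx; simp at hx, ?_⟩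
      intro x hx y hy; simp at hx hy; omega
    · by_cases hda : d ≤ a
      · refine Or.inl ⟨hcard, ({c, d} : Finset ℕ) \ {a, b}, ∅, by simp, by simp, ?_,
          by intro x hx y hy; simp at hy⟩
        intro x hx y hy; simp at hx hy; omega
      · by_cases hnest : a ≤ c ∧ d ≤ b
        · refine Or.inr ⟨hcard', ({a} : Finset ℕ) \ {c, d}, ({b} : Finset ℕ) \ {c, d}, ?_, ?_, ?_, ?_⟩
          · rw [Finset.disjoint_left]; intro x hx hx'; simp at hx hx'; omega
          · ext x; simp; omega
          · intro x hx y hy; simp at hx hy; omega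
          · intro x hx y hy; simp at hx hy; omega
        · have hnest' : c ≤ a ∧ b ≤ d := by omega
          refine Or.inl ⟨hcard, ({c} : Finset ℕ) \ {a, b}, ({d} : Finset ℕ) \ {a, b}, ?_, ?_, ?_, ?_⟩
          · rw [Finset.disjoint_left]; intro x hx hx'; simp at hx hx'; omega
          · ext x; simp; omega
          · intro x hx y hy; simp at hx hy; omega
          · intro x hx y hy; simp at hx hy; omega

end WSAux

namespace WSAux

lemma isK2 {n : ℕ} {K : Finset ℕ} (h : IsKSubset n 2 K) :
    ∃ a b, 1 ≤ a ∧ a < b ∧ b ≤ n ∧ K = {a, b} := by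
  obtain ⟨hsub, hcard⟩ := h
  obtain ⟨x, y, hxy, rfl⟩ := Finset.card_eq_two.1 hcard
  have hx := hsub (by simp : x ∈ ({x, y} : Finset ℕ))
  have hy := hsub (by simp : y ∈ ({x, y} : Finset ℕ))
  simp [Finset.mem_Icc] at hx hy
  rcases lt_or_gt_of_ne hxy with h' | h'
  · exact ⟨x, y, hx.1, h', hy.2, rfl⟩
  · exact ⟨y, x, hy.1, h', hx.2, by rw [Finset.pair_comm]⟩

lemma isKSubset_pair {n a b : ℕ} (h1 : 1 ≤ a) (h2 : a < b) (h3 : b ≤ n) :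
    IsKSubset n 2 ({a, b} : Finset ℕ) := by
  refine ⟨?_, card_pair' h2⟩
  intro x hx; simp at hx; simp [Finset.mem_Icc]; omega

lemma mem_of_maximal {n : ℕ} {𝒞 : Finset (Finset ℕ)} (h : MaximalWS n 2 𝒞) {a b : ℕ}
    (h1 : 1 ≤ a) (h2 : a < b) (h3 : b ≤ n)
    (hall : ∀ c d, 1 ≤ c → c < d → d ≤ n → ({c, d} : Finset ℕ) ∈ 𝒞 → NC c d a b) :
    ({a, b} : Finset ℕ) ∈ 𝒞 := by
  refine h.2.2 _ (isKSubset_pair h1 h2 h3) ?_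
  intro I hI
  obtain ⟨c, d, hc1, hcd, hdn, rfl⟩ := isK2 (h.1 I hI)
  exact (ws_pair_iff hcd h2).2 (hall c d hc1 hcd hdn hI)

/-- the pair `{1,n}` belongs to every maximal collection. -/
lemma pair_one_top_mem {n : ℕ} {𝒞 : Finset (Finset ℕ)} (h : MaximalWS n 2 𝒞) (hn : 2 ≤ n) :
    ({1, n} : Finset ℕ) ∈ 𝒞 := by
  refine mem_of_maximal h le_rfl (by omega) le_rfl ?_
  intro c d hc1 hcd hdn hmem
  constructor <;> · rintro ⟨x1, x2, x3⟩; omega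

lemma pair_one_two_mem {n : ℕ} {𝒞 : Finset (Finset ℕ)} (h : MaximalWS n 2 𝒞) (hn : 2 ≤ n) :
    ({1, 2} : Finset ℕ) ∈ 𝒞 := by
  refine mem_of_maximal h le_rfl (by omega) hn ?_
  intro c d hc1 hcd hdn hmem
  constructor <;> · rintro ⟨x1, x2, x3⟩; omega

end WSAux

namespace WSAux

lemma nc_shift {m a b c d : ℕ} : NC (a + m) (b + m) (c + m) (d + m) ↔ NC a b c d := by
  simp only [NC]; omega

lemma image_pair_add {a b m : ℕ} :
    Finset.image (· + m) ({a, b} : Finset ℕ) = {a + m, b + m} := by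
  simp [Finset.image_insert]

/-- glue two maximal collections along the pivot `j`. -/
def Glue (N j : ℕ) (C₁ C₂ : Finset (Finset ℕ)) : Finset (Finset ℕ) :=
  insert {1, N} (C₁ ∪ C₂.image (Finset.image (· + (j - 1))))

lemma mem_glue {N j : ℕ} {C₁ C₂ : Finset (Finset ℕ)} {I : Finset ℕ} :
    I ∈ Glue N j C₁ C₂ ↔
      I = {1, N} ∨ I ∈ C₁ ∨ ∃ K ∈ C₂, I = Finset.image (· + (j - 1)) K := by
  simp [Glue, eq_comm]

/-- locate members of the glue as pairs. -/
lemma glue_mem_elim {N j : ℕ} {C₁ C₂ : Finset (Finset ℕ)}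
    (hj2 : 2 ≤ j) (hjN : j < N)
    (hC₁ : MaximalWS j 2 C₁) (hC₂ : MaximalWS (N + 1 - j) 2 C₂) {I : Finset ℕ}
    (hI : I ∈ Glue N j C₁ C₂) :
    ∃ a b, 1 ≤ a ∧ a < b ∧ b ≤ N ∧ I = {a, b} ∧
      ((b ≤ j ∧ I ∈ C₁) ∨
       (j ≤ a ∧ ∃ c d, c < d ∧ a = c + (j - 1) ∧ b = d + (j - 1) ∧ ({c, d} : Finset ℕ) ∈ C₂) ∨
       (a = 1 ∧ b = N)) := by
  rcases mem_glue.1 hI with rfl | hI | ⟨K, hK, rfl⟩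
  · exact ⟨1, N, le_rfl, by omega, le_rfl, rfl, Or.inr (Or.inr ⟨rfl, rfl⟩)⟩
  · obtain ⟨a, b, h1, h2, h3, rfl⟩ := isK2 (hC₁.1 _ hI)
    exact ⟨a, b, h1, h2, by omega, rfl, Or.inl ⟨h3, hI⟩⟩
  · obtain ⟨c, d, h1, h2, h3, rfl⟩ := isK2 (hC₂.1 _ hK)
    refine ⟨c + (j - 1), d + (j - 1), by omega, by omega, by omega, image_pair_add, ?_⟩
    exact Or.inr (Or.inl ⟨by omega, c, d, h2, rfl, rfl, hK⟩)

lemma pair_one_j_mem {j : ℕ} {C : Finset (Finset ℕ)} (hC : MaximalWS j 2 C) (hj : 2 ≤ j) :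
    ({1, j} : Finset ℕ) ∈ C := pair_one_top_mem hC hj

lemma glue_maximal {N j : ℕ} {C₁ C₂ : Finset (Finset ℕ)}
    (hj2 : 2 ≤ j) (hjN : j < N)
    (hC₁ : MaximalWS j 2 C₁) (hC₂ : MaximalWS (N + 1 - j) 2 C₂) :
    MaximalWS N 2 (Glue N j C₁ C₂) := by
  have hN2j : 2 ≤ N + 1 - j := by omega
  refine ⟨?_, ?_, ?_⟩
  · -- members are 2-subsets of [1,N]
    intro I hI
    obtain ⟨a, b, h1, h2, h3, rfl, -⟩ := glue_mem_elim hj2 hjN hC₁ hC₂ hI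
    exact isKSubset_pair h1 h2 h3
  · -- pairwise weakly separated
    intro I hI J hJ
    obtain ⟨a, b, ha1, hab, hbN, rfl, hloc⟩ := glue_mem_elim hj2 hjN hC₁ hC₂ hI
    obtain ⟨c, d, hc1, hcd, hdN, rfl, hloc'⟩ := glue_mem_elim hj2 hjN hC₁ hC₂ hJ
    rw [ws_pair_iff hab hcd]
    rcases hloc with ⟨hbj, hIC⟩ | ⟨hja, c', d', hc'd', rfl, rfl, hKC⟩ | ⟨rfl, rfl⟩
    · rcases hloc' with ⟨hdj, hJC⟩ | ⟨hjc, e, f, hef, rfl, rfl, hLC⟩ | ⟨rfl, rfl⟩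
      · exact (ws_pair_iff hab hcd).1 (hC₁.2.1 _ hIC _ hJC)
      · simp only [NC]; omega
      · simp only [NC]; omega
    · rcases hloc' with ⟨hdj, hJC⟩ | ⟨hjc, e, f, hef, rfl, rfl, hLC⟩ | ⟨rfl, rfl⟩
      · simp only [NC]; omega
      · rw [nc_shift]
        exact (ws_pair_iff hc'd' hef).1 (hC₂.2.1 _ hKC _ hLC)
      · simp only [NC]; omega
    · rcases hloc' with ⟨hdj, hJC⟩ | ⟨hjc, e, f, hef, rfl, rfl, hLC⟩ | ⟨rfl, rfl⟩
      · simp only [NC]; omega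
      · simp only [NC]; omega
      · simp only [NC]; omega
  · -- maximality
    intro K hK hall
    obtain ⟨a, b, ha1, hab, hbN, rfl⟩ := isK2 hK
    -- `{1,j}` is in `C₁`, `{j,N}` is in the glue
    have h1j : ({1, j} : Finset ℕ) ∈ C₁ := pair_one_j_mem hC₁ hj2
    have h1j' : ({1, j} : Finset ℕ) ∈ Glue N j C₁ C₂ := mem_glue.2 (Or.inr (Or.inl h1j))
    have hjn2 : ({1, N + 1 - j} : Finset ℕ) ∈ C₂ := pair_one_top_mem hC₂ hN2j
    have hjN' : ({j, N} : Finset ℕ) ∈ Glue N j C₁ C₂ := by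
      refine mem_glue.2 (Or.inr (Or.inr ⟨_, hjn2, ?_⟩))
      rw [image_pair_add, show 1 + (j - 1) = j by omega,
        show N + 1 - j + (j - 1) = N by omega]
    have nc1 : NC 1 j a b := (ws_pair_iff (by omega) hab).1 (hall _ h1j')
    have nc2 : NC j N a b := (ws_pair_iff (by omega) hab).1 (hall _ hjN')
    simp only [NC] at nc1 nc2
    have htri : b ≤ j ∨ j ≤ a ∨ (a = 1 ∧ b = N) := by omega
    rcases htri with hbj | hja | ⟨rfl, rfl⟩
    · -- K lies in [1,j] : use maximality of C₁
      refine mem_glue.2 (Or.inr (Or.inl ?_))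
      refine hC₁.2.2 _ (isKSubset_pair ha1 hab hbj) ?_
      intro I hI
      exact hall _ (mem_glue.2 (Or.inr (Or.inl hI)))
    · -- K lies in [j,N] : use maximality of C₂
      have hK₀ : ({a - (j - 1), b - (j - 1)} : Finset ℕ) ∈ C₂ := by
        refine hC₂.2.2 _ (isKSubset_pair (by omega) (by omega) (by omega)) ?_
        intro I hI
        obtain ⟨c, d, hc1, hcd, hdn, rfl⟩ := isK2 (hC₂.1 _ hI)
        have hIg : Finset.image (· + (j - 1)) ({c, d} : Finset ℕ) ∈ Glue N j C₁ C₂ :=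
          mem_glue.2 (Or.inr (Or.inr ⟨_, hI, rfl⟩))
        rw [image_pair_add] at hIg
        have := (ws_pair_iff (by omega) hab).1 (hall _ hIg)
        rw [ws_pair_iff hcd (by omega : a - (j-1) < b - (j-1))]
        simp only [NC] at this ⊢; omega
      refine mem_glue.2 (Or.inr (Or.inr ⟨_, hK₀, ?_⟩))
      rw [image_pair_add, show a - (j - 1) + (j - 1) = a by omega,
        show b - (j - 1) + (j - 1) = b by omega]
    · exact mem_glue.2 (Or.inl rfl)

end WSAux

namespace WSAux

/-- the pivot of a maximal collection: the largest `i ≤ N-1` with `{1,i}` in it. -/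
def piv (N : ℕ) (𝒞 : Finset (Finset ℕ)) : ℕ :=
  ((Finset.Icc 2 (N - 1)).filter (fun i => ({1, i} : Finset ℕ) ∈ 𝒞)).sup id

def split₁ (j : ℕ) (𝒞 : Finset (Finset ℕ)) : Finset (Finset ℕ) :=
  𝒞.filter (fun K => K ⊆ Finset.Icc 1 j)

def split₂ (N j : ℕ) (𝒞 : Finset (Finset ℕ)) : Finset (Finset ℕ) :=
  (𝒞.filter (fun K => K ⊆ Finset.Icc j N)).image (Finset.image (· - (j - 1)))

lemma pair_subset_Icc {a b x y : ℕ} :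
    ({a, b} : Finset ℕ) ⊆ Finset.Icc x y ↔ (x ≤ a ∧ a ≤ y ∧ x ≤ b ∧ b ≤ y) := by
  simp [Finset.insert_subset_iff, Finset.mem_Icc, and_assoc]

lemma piv_mem {N : ℕ} {𝒞 : Finset (Finset ℕ)} (h : MaximalWS N 2 𝒞) (hN : 3 ≤ N) :
    piv N 𝒞 ∈ (Finset.Icc 2 (N - 1)).filter (fun i => ({1, i} : Finset ℕ) ∈ 𝒞) := by
  set F := (Finset.Icc 2 (N - 1)).filter (fun i => ({1, i} : Finset ℕ) ∈ 𝒞) with hF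
  have hne : F.Nonempty := by
    refine ⟨2, ?_⟩
    rw [hF, Finset.mem_filter, Finset.mem_Icc]
    exact ⟨⟨le_rfl, by omega⟩, pair_one_two_mem h (by omega)⟩
  obtain ⟨b, hb, hsup⟩ := Finset.exists_mem_eq_sup F hne id
  rw [piv, ← hF, hsup]; exact hb

lemma piv_spec {N : ℕ} {𝒞 : Finset (Finset ℕ)} (h : MaximalWS N 2 𝒞) (hN : 3 ≤ N) :
    2 ≤ piv N 𝒞 ∧ piv N 𝒞 ≤ N - 1 ∧ ({1, piv N 𝒞} : Finset ℕ) ∈ 𝒞 := by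
  have := piv_mem h hN
  rw [Finset.mem_filter, Finset.mem_Icc] at this
  exact ⟨this.1.1, this.1.2, this.2⟩

lemma le_piv {N : ℕ} {𝒞 : Finset (Finset ℕ)} {i : ℕ} (h2 : 2 ≤ i) (hi : i ≤ N - 1)
    (hmem : ({1, i} : Finset ℕ) ∈ 𝒞) : i ≤ piv N 𝒞 := by
  refine Finset.le_sup (f := id) ?_
  rw [Finset.mem_filter, Finset.mem_Icc]
  exact ⟨⟨h2, hi⟩, hmem⟩

lemma piv_top_mem {N : ℕ} {𝒞 : Finset (Finset ℕ)} (h : MaximalWS N 2 𝒞) (hN : 3 ≤ N) :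
    ({piv N 𝒞, N} : Finset ℕ) ∈ 𝒞 := by
  obtain ⟨hj2, hjN, hj⟩ := piv_spec h hN
  refine mem_of_maximal h (by omega) (by omega) le_rfl ?_
  intro c d hc1 hcd hdn hmem
  constructor
  · rintro ⟨x1, x2, x3⟩
    -- c < piv < d < N; then c = 1 and d would be a bigger pivot
    have hnc : NC c d 1 (piv N 𝒞) :=
      (ws_pair_iff hcd (by omega)).1 (h.2.1 _ hmem _ hj)
    simp only [NC] at hnc
    have hc : c = 1 := by omega
    subst hc
    have := le_piv (N := N) (𝒞 := 𝒞) (by omega) (by omega) hmem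
    omega
  · rintro ⟨x1, x2, x3⟩; omega

lemma mem_located {N : ℕ} {𝒞 : Finset (Finset ℕ)} (h : MaximalWS N 2 𝒞) (hN : 3 ≤ N)
    {K : Finset ℕ} (hK : K ∈ 𝒞) :
    ∃ a b, 1 ≤ a ∧ a < b ∧ b ≤ N ∧ K = {a, b} ∧
      (b ≤ piv N 𝒞 ∨ piv N 𝒞 ≤ a ∨ (a = 1 ∧ b = N)) := by
  obtain ⟨hj2, hjN, hj⟩ := piv_spec h hN
  obtain ⟨a, b, h1, h2, h3, rfl⟩ := isK2 (h.1 _ hK)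
  have nc1 : NC 1 (piv N 𝒞) a b :=
    (ws_pair_iff (by omega) h2).1 (h.2.1 _ hj _ hK)
  have nc2 : NC (piv N 𝒞) N a b :=
    (ws_pair_iff (by omega) h2).1 (h.2.1 _ (piv_top_mem h hN) _ hK)
  simp only [NC] at nc1 nc2
  exact ⟨a, b, h1, h2, h3, rfl, by omega⟩

lemma split₁_maximal {N : ℕ} {𝒞 : Finset (Finset ℕ)} (h : MaximalWS N 2 𝒞) (hN : 3 ≤ N) :
    MaximalWS (piv N 𝒞) 2 (split₁ (piv N 𝒞) 𝒞) := by
  obtain ⟨hj2, hjN, hj⟩ := piv_spec h hN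
  set j := piv N 𝒞
  refine ⟨?_, ?_, ?_⟩
  · intro I hI
    rw [split₁, Finset.mem_filter] at hI
    exact ⟨hI.2, (h.1 _ hI.1).2⟩
  · intro I hI J hJ
    rw [split₁, Finset.mem_filter] at hI hJ
    exact h.2.1 _ hI.1 _ hJ.1
  · intro K hKsub hall
    obtain ⟨a, b, h1, h2, h3, rfl⟩ := isK2 hKsub
    have hK𝒞 : ({a, b} : Finset ℕ) ∈ 𝒞 := by
      refine mem_of_maximal h h1 h2 (by omega) ?_
      intro c d hc1 hcd hdn hmem
      obtain ⟨c', d', hc'1, hc'd', hd'N, heq, hloc⟩ := mem_located h hN hmem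
      have hcc : c' = c ∧ d' = d := by
        have h1 : c ∈ ({c', d'} : Finset ℕ) := by rw [← heq]; simp
        have h2 : d ∈ ({c', d'} : Finset ℕ) := by rw [← heq]; simp
        simp at h1 h2; omega
      obtain ⟨rfl, rfl⟩ := hcc
      rcases hloc with hloc | hloc | ⟨rfl, rfl⟩
      · -- both inside [1,j]
        have : ({c', d'} : Finset ℕ) ∈ split₁ j 𝒞 := by
          rw [split₁, Finset.mem_filter, pair_subset_Icc]
          exact ⟨hmem, by omega⟩
        have := (ws_pair_iff hc'd' h2).1 (hall _ this)
        simp only [NC] at this ⊢; omega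
      · simp only [NC]; omega
      · simp only [NC]; omega
    rw [split₁, Finset.mem_filter, pair_subset_Icc]
    exact ⟨hK𝒞, by omega⟩

lemma image_pair_sub {a b m : ℕ} :
    Finset.image (· - m) ({a, b} : Finset ℕ) = {a - m, b - m} := by
  simp [Finset.image_insert]

lemma split₂_maximal {N : ℕ} {𝒞 : Finset (Finset ℕ)} (h : MaximalWS N 2 𝒞) (hN : 3 ≤ N) :
    MaximalWS (N + 1 - piv N 𝒞) 2 (split₂ N (piv N 𝒞) 𝒞) := by
  obtain ⟨hj2, hjN, hj⟩ := piv_spec h hN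
  set j := piv N 𝒞 with hjdef
  have hmem₂ : ∀ I ∈ split₂ N j 𝒞, ∃ c d, j ≤ c ∧ c < d ∧ d ≤ N ∧
      ({c, d} : Finset ℕ) ∈ 𝒞 ∧ I = {c - (j - 1), d - (j - 1)} := by
    intro I hI
    rw [split₂, Finset.mem_image] at hI
    obtain ⟨K, hK, rfl⟩ := hI
    rw [Finset.mem_filter] at hK
    obtain ⟨c, d, h1, h2, h3, rfl⟩ := isK2 (h.1 _ hK.1)
    rw [pair_subset_Icc] at hK
    exact ⟨c, d, hK.2.1, h2, h3, hK.1, image_pair_sub⟩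
  refine ⟨?_, ?_, ?_⟩
  · intro I hI
    obtain ⟨c, d, h1, h2, h3, hmem, rfl⟩ := hmem₂ _ hI
    exact isKSubset_pair (by omega) (by omega) (by omega)
  · intro I hI J hJ
    obtain ⟨c, d, h1, h2, h3, hmem, rfl⟩ := hmem₂ _ hI
    obtain ⟨e, f, h1', h2', h3', hmem', rfl⟩ := hmem₂ _ hJ
    have := (ws_pair_iff h2 h2').1 (h.2.1 _ hmem _ hmem')
    rw [ws_pair_iff (by omega : c - (j-1) < d - (j-1)) (by omega : e - (j-1) < f - (j-1))]
    simp only [NC] at this ⊢; omega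
  · intro K hKsub hall
    obtain ⟨a, b, h1, h2, h3, rfl⟩ := isK2 hKsub
    -- the shifted-up pair belongs to 𝒞
    have hup : ({a + (j - 1), b + (j - 1)} : Finset ℕ) ∈ 𝒞 := by
      refine mem_of_maximal h (by omega) (by omega) (by omega) ?_
      intro c d hc1 hcd hdn hmem
      obtain ⟨c', d', hc'1, hc'd', hd'N, heq, hloc⟩ := mem_located h hN hmem
      have hcc : c' = c ∧ d' = d := by
        have h1' : c ∈ ({c', d'} : Finset ℕ) := by rw [← heq]; simp
        have h2' : d ∈ ({c', d'} : Finset ℕ) := by rw [← heq]; simp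
        simp at h1' h2'; omega
      obtain ⟨rfl, rfl⟩ := hcc
      rcases hloc with hloc | hloc | ⟨rfl, rfl⟩
      · simp only [NC]; omega
      · -- both inside [j,N]
        have hmem' : ({c' - (j - 1), d' - (j - 1)} : Finset ℕ) ∈ split₂ N j 𝒞 := by
          rw [split₂, Finset.mem_image]
          refine ⟨{c', d'}, ?_, image_pair_sub⟩
          rw [Finset.mem_filter, pair_subset_Icc]
          exact ⟨hmem, by omega⟩
        have := (ws_pair_iff (by omega : c' - (j-1) < d' - (j-1)) h2).1 (hall _ hmem')
        simp only [NC] at this ⊢; omega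
      · simp only [NC]; omega
    rw [split₂, Finset.mem_image]
    refine ⟨{a + (j - 1), b + (j - 1)}, ?_, ?_⟩
    · rw [Finset.mem_filter, pair_subset_Icc]
      exact ⟨hup, by omega⟩
    · rw [image_pair_sub, show a + (j-1) - (j-1) = a by omega, show b + (j-1) - (j-1) = b by omega]

/-- gluing the two splittings recovers the collection. -/
lemma glue_split {N : ℕ} {𝒞 : Finset (Finset ℕ)} (h : MaximalWS N 2 𝒞) (hN : 3 ≤ N) :
    Glue N (piv N 𝒞) (split₁ (piv N 𝒞) 𝒞) (split₂ N (piv N 𝒞) 𝒞) = 𝒞 := by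
  obtain ⟨hj2, hjN, hj⟩ := piv_spec h hN
  set j := piv N 𝒞 with hjdef
  apply Finset.Subset.antisymm
  · intro K hK
    rcases mem_glue.1 hK with rfl | hK | ⟨L, hL, rfl⟩
    · exact pair_one_top_mem h (by omega)
    · rw [split₁, Finset.mem_filter] at hK; exact hK.1
    · rw [split₂, Finset.mem_image] at hL
      obtain ⟨K', hK', rfl⟩ := hL
      rw [Finset.mem_filter] at hK'
      obtain ⟨c, d, h1, h2, h3, rfl⟩ := isK2 (h.1 _ hK'.1)
      rw [pair_subset_Icc] at hK'
      rw [image_pair_sub, image_pair_add,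
        show c - (j-1) + (j-1) = c by omega, show d - (j-1) + (j-1) = d by omega]
      exact hK'.1
  · intro K hK
    obtain ⟨a, b, h1, h2, h3, rfl, hloc⟩ := mem_located h hN hK
    rcases hloc with hloc | hloc | ⟨rfl, rfl⟩
    · refine mem_glue.2 (Or.inr (Or.inl ?_))
      rw [split₁, Finset.mem_filter, pair_subset_Icc]
      exact ⟨hK, by omega⟩
    · refine mem_glue.2 (Or.inr (Or.inr ⟨Finset.image (· - (j - 1)) {a, b}, ?_, ?_⟩))
      · rw [split₂, Finset.mem_image]
        refine ⟨{a, b}, ?_, rfl⟩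
        rw [Finset.mem_filter, pair_subset_Icc]
        exact ⟨hK, by omega⟩
      · rw [image_pair_sub, image_pair_add,
          show a - (j-1) + (j-1) = a by omega, show b - (j-1) + (j-1) = b by omega]
    · exact mem_glue.2 (Or.inl rfl)

end WSAux

namespace WSAux

lemma piv_glue {N j : ℕ} {C₁ C₂ : Finset (Finset ℕ)}
    (hj2 : 2 ≤ j) (hjN : j < N)
    (hC₁ : MaximalWS j 2 C₁) (hC₂ : MaximalWS (N + 1 - j) 2 C₂) :
    piv N (Glue N j C₁ C₂) = j := by
  refine le_antisymm (Finset.sup_le ?_) (le_piv hj2 (by omega) ?_)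
  · intro i hi
    rw [Finset.mem_filter, Finset.mem_Icc] at hi
    obtain ⟨⟨hi2, hiN⟩, hmem⟩ := hi
    simp only [id_eq]
    obtain ⟨a, b, h1, h2, h3, heq, hloc⟩ := glue_mem_elim hj2 hjN hC₁ hC₂ hmem
    have hab : a = 1 ∧ b = i := by
      have e1 : (1 : ℕ) ∈ ({a, b} : Finset ℕ) := by rw [← heq]; simp
      have e2 : i ∈ ({a, b} : Finset ℕ) := by rw [← heq]; simp
      simp at e1 e2; omega
    obtain ⟨rfl, rfl⟩ := hab
    rcases hloc with ⟨hbj, -⟩ | ⟨hja, -⟩ | ⟨-, rfl⟩ <;> omega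
  · exact mem_glue.2 (Or.inr (Or.inl (pair_one_j_mem hC₁ hj2)))

lemma split₁_glue {N j : ℕ} {C₁ C₂ : Finset (Finset ℕ)}
    (hj2 : 2 ≤ j) (hjN : j < N)
    (hC₁ : MaximalWS j 2 C₁) (hC₂ : MaximalWS (N + 1 - j) 2 C₂) :
    split₁ j (Glue N j C₁ C₂) = C₁ := by
  ext K
  rw [split₁, Finset.mem_filter]
  constructor
  · rintro ⟨hK, hsub⟩
    obtain ⟨a, b, h1, h2, h3, rfl, hloc⟩ := glue_mem_elim hj2 hjN hC₁ hC₂ hK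
    rw [pair_subset_Icc] at hsub
    rcases hloc with ⟨-, hmem⟩ | ⟨hja, c, d, hcd, rfl, rfl, -⟩ | ⟨rfl, rfl⟩
    · exact hmem
    · omega
    · omega
  · intro hK
    refine ⟨mem_glue.2 (Or.inr (Or.inl hK)), (hC₁.1 _ hK).1⟩

lemma split₂_glue {N j : ℕ} {C₁ C₂ : Finset (Finset ℕ)}
    (hj2 : 2 ≤ j) (hjN : j < N)
    (hC₁ : MaximalWS j 2 C₁) (hC₂ : MaximalWS (N + 1 - j) 2 C₂) :
    split₂ N j (Glue N j C₁ C₂) = C₂ := by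
  ext K
  rw [split₂, Finset.mem_image]
  constructor
  · rintro ⟨K', hK', rfl⟩
    rw [Finset.mem_filter] at hK'
    obtain ⟨hK', hsub⟩ := hK'
    obtain ⟨a, b, h1, h2, h3, rfl, hloc⟩ := glue_mem_elim hj2 hjN hC₁ hC₂ hK'
    rw [pair_subset_Icc] at hsub
    rcases hloc with ⟨hbj, -⟩ | ⟨hja, c, d, hcd, rfl, rfl, hmem⟩ | ⟨rfl, rfl⟩
    · omega
    · rw [image_pair_sub, show c + (j-1) - (j-1) = c by omega,
        show d + (j-1) - (j-1) = d by omega]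
      exact hmem
    · omega
  · intro hK
    obtain ⟨c, d, h1, h2, h3, rfl⟩ := isK2 (hC₂.1 _ hK)
    refine ⟨{c + (j - 1), d + (j - 1)}, ?_, ?_⟩
    · rw [Finset.mem_filter, pair_subset_Icc]
      refine ⟨?_, by omega⟩
      refine mem_glue.2 (Or.inr (Or.inr ⟨_, hK, ?_⟩))
      rw [image_pair_add]
    · rw [image_pair_sub, show c + (j-1) - (j-1) = c by omega,
        show d + (j-1) - (j-1) = d by omega]

instance ws_finite (n : ℕ) : Finite {𝒞 : Finset (Finset ℕ) // MaximalWS n 2 𝒞} := by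
  have hsub : {C : Finset (Finset ℕ) | MaximalWS n 2 C} ⊆
      ↑((Finset.Icc 1 n).powerset.powerset) := by
    intro C hC
    have hC' : MaximalWS n 2 C := hC
    rw [Finset.mem_coe, Finset.mem_powerset]
    intro I hI
    rw [Finset.mem_powerset]
    exact (hC'.1 I hI).1
  exact (Set.Finite.subset (Finset.finite_toSet _) hsub).to_subtype

end WSAux

namespace WSAux

abbrev SType (m : ℕ) := {𝒞 : Finset (Finset ℕ) // MaximalWS m 2 𝒞}

lemma mem_Icc₂ {N j : ℕ} (hj : j ∈ Finset.Icc 2 (N - 1)) (hN : 3 ≤ N) : 2 ≤ j ∧ j < N := by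
  rw [Finset.mem_Icc] at hj; omega

def glueFun (N : ℕ) (hN : 3 ≤ N) :
    (Σ j : (Finset.Icc 2 (N - 1) : Finset ℕ), SType j × SType (N + 1 - j)) → SType N :=
  fun x => ⟨Glue N x.1 x.2.1.1 x.2.2.1,
    glue_maximal (mem_Icc₂ x.1.2 hN).1 (mem_Icc₂ x.1.2 hN).2 x.2.1.2 x.2.2.2⟩

lemma glueFun_bij (N : ℕ) (hN : 3 ≤ N) : Function.Bijective (glueFun N hN) := by
  constructor
  · rintro ⟨⟨j, hj⟩, ⟨C₁, h1⟩, ⟨C₂, h2⟩⟩ ⟨⟨j', hj'⟩, ⟨C₁', h1'⟩, ⟨C₂', h2'⟩⟩ heq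
    have hg : Glue N j C₁ C₂ = Glue N j' C₁' C₂' := congrArg Subtype.val heq
    obtain ⟨hj2, hjN⟩ := mem_Icc₂ hj hN
    obtain ⟨hj2', hjN'⟩ := mem_Icc₂ hj' hN
    have hjj : j = j' := by
      rw [← piv_glue hj2 hjN h1 h2, hg, piv_glue hj2' hjN' h1' h2']
    subst hjj
    have e1 : C₁ = C₁' := by
      rw [← split₁_glue hj2 hjN h1 h2, hg, split₁_glue hj2' hjN' h1' h2']
    have e2 : C₂ = C₂' := by
      rw [← split₂_glue hj2 hjN h1 h2, hg, split₂_glue hj2' hjN' h1' h2']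
    subst e1; subst e2; rfl
  · rintro ⟨𝒞, h𝒞⟩
    obtain ⟨hj2, hjN, -⟩ := piv_spec h𝒞 hN
    refine ⟨⟨⟨piv N 𝒞, by rw [Finset.mem_Icc]; exact ⟨hj2, hjN⟩⟩,
      ⟨split₁ _ 𝒞, split₁_maximal h𝒞 hN⟩, ⟨split₂ _ _ 𝒞, split₂_maximal h𝒞 hN⟩⟩, ?_⟩
    exact Subtype.ext (glue_split h𝒞 hN)

lemma card_rec {N : ℕ} (hN : 3 ≤ N) :
    Nat.card (SType N) =
      ∑ j ∈ Finset.Icc 2 (N - 1), Nat.card (SType j) * Nat.card (SType (N + 1 - j)) := by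
  classical
  haveI : ∀ m : ℕ, Fintype (SType m) := fun m => Fintype.ofFinite _
  rw [← Nat.card_congr (Equiv.ofBijective _ (glueFun_bij N hN))]
  rw [Nat.card_eq_fintype_card, Fintype.card_sigma]
  rw [← Finset.sum_coe_sort (Finset.Icc 2 (N - 1))]
  refine Finset.sum_congr rfl ?_
  intro j _
  rw [Fintype.card_prod, Nat.card_eq_fintype_card, Nat.card_eq_fintype_card]

lemma max_two_eq {C : Finset (Finset ℕ)} (hC : MaximalWS 2 2 C) :
    C = {({1, 2} : Finset ℕ)} := by
  ext K
  rw [Finset.mem_singleton]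
  constructor
  · intro hK
    obtain ⟨a, b, h1, h2, h3, rfl⟩ := isK2 (hC.1 _ hK)
    have : a = 1 ∧ b = 2 := by omega
    rw [this.1, this.2]
  · rintro rfl
    exact pair_one_top_mem hC le_rfl

lemma card_base : Nat.card (SType 2) = 1 := by
  rw [Nat.card_eq_one_iff_unique]
  constructor
  · exact ⟨fun x y => Subtype.ext ((max_two_eq x.2).trans (max_two_eq y.2).symm)⟩
  · refine ⟨{({1, 2} : Finset ℕ)}, ?_, ?_, ?_⟩
    · intro I hI
      rw [Finset.mem_singleton] at hI
      subst hI
      exact isKSubset_pair le_rfl one_lt_two le_rfl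
    · intro I hI J hJ
      rw [Finset.mem_singleton] at hI hJ
      subst hI; subst hJ
      exact (ws_pair_iff one_lt_two one_lt_two).2 (by simp only [NC]; omega)
    · intro J hJ _
      obtain ⟨a, b, h1, h2, h3, rfl⟩ := isK2 hJ
      have : a = 1 ∧ b = 2 := by omega
      rw [this.1, this.2, Finset.mem_singleton]

end WSAux


/-- The number of maximal collections of pairwise weakly separated `2`-subsets of
`{1,…,n}` is the Catalan number `C_{n−2}`. -/
theorem card_maximalWS_k2_eq_catalan (n : ℕ) (hn : 2 ≤ n) :
    Nat.card {𝒞 : Finset (Finset ℕ) // MaximalWS n 2 𝒞} = catalan (n - 2) := by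
  induction n using Nat.strong_induction_on with
  | _ n ih =>
    rcases eq_or_lt_of_le hn with h2 | h3
    · rw [← h2]
      simpa using WSAux.card_base
    · have h3 : 3 ≤ n := h3
      rw [show (Nat.card {𝒞 : Finset (Finset ℕ) // MaximalWS n 2 𝒞}) =
        Nat.card (WSAux.SType n) from rfl, WSAux.card_rec h3]
      have hsum : ∀ j ∈ Finset.Icc 2 (n - 1),
          Nat.card (WSAux.SType j) * Nat.card (WSAux.SType (n + 1 - j)) =
          catalan (j - 2) * catalan (n - 1 - j) := by
        intro j hj
        rw [Finset.mem_Icc] at hj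
        rw [ih j (by omega) (by omega), ih (n + 1 - j) (by omega) (by omega),
          show n + 1 - j - 2 = n - 1 - j by omega]
      rw [Finset.sum_congr rfl hsum]
      rw [show Finset.Icc 2 (n - 1) = Finset.Ico 2 n by
        rw [← Finset.Ico_add_one_right_eq_Icc]; congr 1; omega]
      rw [Finset.sum_Ico_eq_sum_range]
      rw [show n - 2 = (n - 3) + 1 by omega, catalan_succ,
        Fin.sum_univ_eq_sum_range (fun i => catalan i * catalan (n - 3 - i)) ((n - 3) + 1)]
      refine Finset.sum_congr rfl ?_
      intro i hi
      have e1 : 2 + i - 2 = i := by omega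
      have e2 : n - 1 - (2 + i) = n - 3 - i := by
        rw [Finset.mem_range] at hi; omega
      rw [e1, e2]
end

section
/- Let n ≥ 5 and let 𝒞 be a maximal collection of pairwise weakly separated 3-element subsets of {1,…,n}. Then 𝒞 contains an almost boundary 3-subset, i.e. a 3-subset of diameter 4. Equivalently, there exists an element g of the dihedral group D_n acting on {1,…,n} such that g·𝒞 contains {1, n−2, n−1}. -/
/-- The cyclic interval of length `l` of `{1,…,n}` starting at `a`. -/
def cycInterval (n a l : ℕ) : Finset ℕ :=
  (Finset.range l).image fun r => (a + r - 1) % n + 1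

/-- The diameter of a subset `I` of `{1,…,n}`: the minimal cardinality of a cyclic
interval of `{1,…,n}` containing `I`. -/
noncomputable def cycDiameter (n : ℕ) (I : Finset ℕ) : ℕ :=
  sInf {l | ∃ a ∈ Finset.Icc 1 n, I ⊆ cycInterval n a l}

/-- `g` acts on `{1,…,n}` as an element of the dihedral group `D_n`: it is a power of
the rotation `ρ(a) = a+1 mod n`, possibly composed with the reflection `τ(a) = n+1−a`. -/
def DihedralMap (n : ℕ) (g : ℕ → ℕ) : Prop :=
  ∃ r < n, (∀ a, g a = (a - 1 + r) % n + 1) ∨ (∀ a, g a = (n - a + r) % n + 1)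

def LiesBetween (A B : Finset ℕ) : Prop := ∃ b ∈ B, ∃ a ∈ A, ∃ b' ∈ B, b < a ∧ a < b'

theorem exists_partition_iff_not_liesBetween {A B : Finset ℕ} (h : Disjoint A B) :
    (∃ A₁ A₂ : Finset ℕ, Disjoint A₁ A₂ ∧ A₁ ∪ A₂ = A ∧ Prec A₁ B ∧ Prec B A₂) ↔
      ¬LiesBetween A B := by
  constructor
  · rintro ⟨A₁, A₂, -, rfl, h₁, h₂⟩ ⟨b, hb, a, ha, b', hb', hba, hab'⟩
    rcases Finset.mem_union.1 ha with ha | ha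
    · exact lt_asymm (h₁ a ha b hb) hba
    · exact lt_asymm (h₂ b' hb' a ha) hab'
  · intro hA
    classical
    refine ⟨A.filter (fun a => ∀ b ∈ B, a < b), A.filter (fun a => ¬∀ b ∈ B, a < b),
      Finset.disjoint_filter_filter_not _ _ _, Finset.filter_union_filter_not_eq _ _,
      fun a ha => (Finset.mem_filter.1 ha).2, fun b hb a ha => ?_⟩
    obtain ⟨ha, hlow⟩ := Finset.mem_filter.1 ha
    simp only [not_forall, not_lt, exists_prop] at hlow
    obtain ⟨b₀, hb₀, hb₀a⟩ := hlow
    have hne : ∀ c ∈ B, a ≠ c := fun c hc hac => Finset.disjoint_left.1 h ha (hac ▸ hc)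
    by_contra hba
    exact hA ⟨b₀, hb₀, a, ha, b, hb, lt_of_le_of_ne hb₀a (hne b₀ hb₀).symm,
      lt_of_le_of_ne (not_lt.1 hba) (hne b hb)⟩

theorem weaklySeparated_iff {I J : Finset ℕ} (h : I.card = J.card) :
    WeaklySeparated I J ↔ ¬LiesBetween (J \ I) (I \ J) ∨ ¬LiesBetween (I \ J) (J \ I) := by
  simp only [WeaklySeparated, h, le_refl, true_and,
    exists_partition_iff_not_liesBetween disjoint_sdiff_sdiff]

theorem lt_and_lt_of_weaklySeparated {R P : Finset ℕ} (hRP : WeaklySeparated R P)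
    (hcard : R.card = P.card) {lo r hi : ℕ} (hlo : lo ∈ P \ R) (hr : r ∈ R \ P)
    (hhi : hi ∈ P \ R) (hlor : lo < r) (hrhi : r < hi) :
    ∀ t ∈ R \ P, lo < t ∧ t < hi := by
  intro t ht
  rcases (weaklySeparated_iff hcard).1 hRP with hPR | hRP'
  · have hne : ∀ c ∈ P \ R, t ≠ c := fun c hc htc =>
      (Finset.mem_sdiff.1 hc).2 (htc ▸ (Finset.mem_sdiff.1 ht).1)
    by_contra hout
    rcases not_and_or.1 hout with h | h
    · exact hPR ⟨t, ht, lo, hlo, r, hr, lt_of_le_of_ne (not_lt.1 h) (hne lo hlo), hlor⟩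
    · exact hPR ⟨r, hr, hi, hhi, t, ht, hrhi, lt_of_le_of_ne (not_lt.1 h) (hne hi hhi).symm⟩
  · exact absurd ⟨lo, hlo, r, hr, hi, hhi, hlor, hrhi⟩ hRP'

theorem mod_eq_or_eq_sub {X n : ℕ} (h : X < 2 * n) :
    X % n = X ∧ X < n ∨ X % n = X - n ∧ n ≤ X := by
  rcases lt_or_ge X n with hX | hX
  · exact Or.inl ⟨Nat.mod_eq_of_lt hX, hX⟩
  · exact Or.inr ⟨by rw [Nat.mod_eq_sub_mod hX, Nat.mod_eq_of_lt (by omega)], hX⟩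

theorem mem_cycInterval_iff {n a l x : ℕ} (ha : 1 ≤ a) (han : a ≤ n) (hl : l ≤ n) :
    x ∈ cycInterval n a l ↔ 1 ≤ x ∧ x ≤ n ∧ (a ≤ x ∧ x < a + l ∨ x + n < a + l) := by
  simp only [cycInterval, Finset.mem_image, Finset.mem_range]
  constructor
  · rintro ⟨r, hr, rfl⟩
    have := mod_eq_or_eq_sub (X := a + r - 1) (n := n) (by omega)
    omega
  · rintro ⟨hx1, hxn, hx | hx⟩
    · refine ⟨x - a, by omega, ?_⟩
      rw [Nat.mod_eq_of_lt (by omega)]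
      omega
    · refine ⟨x + n - a, by omega, ?_⟩
      rw [show a + (x + n - a) - 1 = x - 1 + n by omega, Nat.add_mod_right,
        Nat.mod_eq_of_lt (by omega)]
      omega

theorem cycDiameter_le {n a l : ℕ} {I : Finset ℕ} (ha : a ∈ Finset.Icc 1 n)
    (hI : I ⊆ cycInterval n a l) : cycDiameter n I ≤ l :=
  Nat.sInf_le ⟨a, ha, hI⟩

theorem cycDiameter_le_of_subset_Icc {n a b : ℕ} {I : Finset ℕ} (ha : 1 ≤ a) (hab : a ≤ b)
    (hb : b ≤ n) (hI : I ⊆ Finset.Icc a b) : cycDiameter n I ≤ b + 1 - a := by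
  refine cycDiameter_le (Finset.mem_Icc.2 ⟨ha, by omega⟩) fun x hx => ?_
  have := Finset.mem_Icc.1 (hI hx)
  rw [mem_cycInterval_iff ha (by omega) (by omega)]
  omega

theorem exists_subset_cycInterval_cycDiameter {n : ℕ} {I : Finset ℕ} (hn : 0 < n)
    (hI : I ⊆ Finset.Icc 1 n) :
    cycDiameter n I ≤ n ∧ ∃ a ∈ Finset.Icc 1 n, I ⊆ cycInterval n a (cycDiameter n I) := by
  have hcover : n ∈ {l | ∃ a ∈ Finset.Icc 1 n, I ⊆ cycInterval n a l} := by
    refine ⟨1, Finset.mem_Icc.2 ⟨le_rfl, hn⟩, fun x hx => ?_⟩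
    have := Finset.mem_Icc.1 (hI hx)
    rw [mem_cycInterval_iff le_rfl hn le_rfl]
    omega
  exact ⟨Nat.sInf_le hcover, Nat.sInf_mem ⟨n, hcover⟩⟩

theorem eq_triple_of_mem {R : Finset ℕ} (hR : R.card = 3) {a b c : ℕ} (ha : a ∈ R)
    (hb : b ∈ R) (hc : c ∈ R) (hab : a ≠ b) (hac : a ≠ c) (hbc : b ≠ c) :
    R = {a, b, c} := by
  refine (Finset.eq_of_subset_of_card_le ?_ ?_).symm
  · intro t ht
    simp only [Finset.mem_insert, Finset.mem_singleton] at ht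
    rcases ht with rfl | rfl | rfl <;> assumption
  · rw [hR, Finset.card_eq_three.2 ⟨a, b, c, hab, hac, hbc, rfl⟩]

theorem IsKSubset.pos {n k : ℕ} {I : Finset ℕ} (hI : IsKSubset n k I) (hk : 0 < k) : 0 < n := by
  obtain ⟨x, hx⟩ := Finset.card_pos.1 (hI.2 ▸ hk)
  have := Finset.mem_Icc.1 (hI.1 hx)
  omega

theorem isKSubset_triple {n x y z : ℕ} (hx : 1 ≤ x) (hxy : x < y) (hyz : y < z)
    (hz : z ≤ n) : IsKSubset n 3 {x, y, z} := by
  refine ⟨fun t ht => ?_, Finset.card_eq_three.2 ⟨x, y, z, by omega, by omega, by omega, rfl⟩⟩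
  simp only [Finset.mem_insert, Finset.mem_singleton] at ht
  rw [Finset.mem_Icc]
  omega

/-- A `3`-subset of diameter at most `3` is a cyclic interval, and a cyclic interval is weakly
separated from every `3`-subset. -/
theorem weaklySeparated_of_cycDiameter_le_three {n : ℕ} {I J : Finset ℕ}
    (hI : IsKSubset n 3 I) (hJ : IsKSubset n 3 J) (hdiam : cycDiameter n I ≤ 3) :
    WeaklySeparated I J := by
  have hn : 0 < n := hI.pos (by norm_num)
  obtain ⟨hdn, a, ha, hsub⟩ := exists_subset_cycInterval_cycDiameter hn hI.1
  have hcard : (cycInterval n a (cycDiameter n I)).card ≤ cycDiameter n I :=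
    Finset.card_image_le.trans (Finset.card_range _).le
  have h3 := Finset.card_le_card hsub
  rw [hI.2] at h3
  have hl : cycDiameter n I = 3 := by omega
  rw [hl] at hsub hcard hdn
  have hIeq := Finset.eq_of_subset_of_card_le hsub (hI.2 ▸ hcard)
  have ha := Finset.mem_Icc.1 ha
  have hmem : ∀ x, x ∈ I ↔ 1 ≤ x ∧ x ≤ n ∧ (a ≤ x ∧ x < a + 3 ∨ x + n < a + 3) := fun x => by
    rw [hIeq]
    exact mem_cycInterval_iff ha.1 ha.2 hdn
  have hJb : ∀ x ∈ J, 1 ≤ x ∧ x ≤ n := fun x hx => Finset.mem_Icc.1 (hJ.1 hx)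
  rw [weaklySeparated_iff (hI.2.trans hJ.2.symm)]
  by_cases hwrap : a + 2 ≤ n
  · left
    rintro ⟨i, hi, j, hj, i', hi', hij, hji'⟩
    simp only [Finset.mem_sdiff, hmem] at hi hj hi'
    have := hJb j hj.1
    omega
  · right
    rintro ⟨j, hj, i, hi, j', hj', hji, hij'⟩
    simp only [Finset.mem_sdiff, hmem] at hi hj hj'
    have := hJb j hj.1
    have := hJb j' hj'.1
    omega

theorem cycDiameter_triple_eq_four {n x y : ℕ} (hn : 5 ≤ n) (hx : 1 ≤ x) (hxy : x < y)
    (hy : y < x + 3) (hxn : x + 3 ≤ n) : cycDiameter n {x, y, x + 3} = 4 := by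
  have hsub : ({x, y, x + 3} : Finset ℕ) ⊆ Finset.Icc x (x + 3) := by
    intro t ht
    simp only [Finset.mem_insert, Finset.mem_singleton] at ht
    rw [Finset.mem_Icc]
    omega
  have hle := cycDiameter_le_of_subset_Icc (n := n) hx (by omega) hxn hsub
  obtain ⟨hdn, a, ha, hcov⟩ := exists_subset_cycInterval_cycDiameter (by omega)
    (hsub.trans (Finset.Icc_subset_Icc hx hxn))
  have ha := Finset.mem_Icc.1 ha
  have hmem := fun t => mem_cycInterval_iff (x := t) ha.1 ha.2 hdn
  have h₁ := (hmem x).1 (hcov (by simp))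
  have h₂ := (hmem y).1 (hcov (by simp))
  have h₃ := (hmem (x + 3)).1 (hcov (by simp))
  omega

theorem mem_of_liesBetween_probe_left {R : Finset ℕ} {x : ℕ}
    (h : LiesBetween (R \ {x, x + 1, x + 3}) ({x, x + 1, x + 3} \ R)) :
    x + 2 ∈ R ∧ x + 3 ∉ R := by
  obtain ⟨q, hq, r, hr, q', hq', hqr, hrq'⟩ := h
  simp only [Finset.mem_sdiff, Finset.mem_insert, Finset.mem_singleton] at hq hr hq'
  obtain rfl : r = x + 2 := by omega
  obtain rfl : q' = x + 3 := by omega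
  exact ⟨hr.1, hq'.2⟩

theorem mem_of_liesBetween_probe_right {R : Finset ℕ} {x : ℕ}
    (h : LiesBetween (R \ {x, x + 2, x + 3}) ({x, x + 2, x + 3} \ R)) :
    x + 1 ∈ R ∧ x ∉ R := by
  obtain ⟨q, hq, r, hr, q', hq', hqr, hrq'⟩ := h
  simp only [Finset.mem_sdiff, Finset.mem_insert, Finset.mem_singleton] at hq hr hq'
  obtain rfl : r = x + 1 := by omega
  obtain rfl : q = x := by omega
  exact ⟨hr.1, hq.2⟩

section NoAlmostBoundary

variable {n : ℕ} {𝒞 : Finset (Finset ℕ)}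

theorem exists_mem_liesBetween_of_cycDiameter_eq_four (h𝒞 : MaximalWS n 3 𝒞)
    (hno4 : ∀ I ∈ 𝒞, cycDiameter n I ≠ 4) {Q : Finset ℕ} (hQ : IsKSubset n 3 Q)
    (hQ4 : cycDiameter n Q = 4) :
    ∃ R ∈ 𝒞, 4 ≤ cycDiameter n R ∧ LiesBetween (R \ Q) (Q \ R) := by
  have hQ𝒞 : Q ∉ 𝒞 := fun h => hno4 Q h hQ4
  obtain ⟨R, hR, hRQ⟩ : ∃ R ∈ 𝒞, ¬WeaklySeparated R Q := by
    by_contra! h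
    exact hQ𝒞 (h𝒞.2.2 Q hQ h)
  have hR3 := h𝒞.1 R hR
  refine ⟨R, hR, ?_, ?_⟩
  · by_contra! h
    exact hRQ (weaklySeparated_of_cycDiameter_le_three hR3 hQ (by omega))
  · rw [weaklySeparated_iff (hR3.2.trans hQ.2.symm), not_or, not_not, not_not] at hRQ
    exact hRQ.2

theorem exists_mem_subset_Icc_drop_max (h𝒞 : MaximalWS n 3 𝒞) (hn : 5 ≤ n)
    (hno4 : ∀ I ∈ 𝒞, cycDiameter n I ≠ 4) {p y x : ℕ} (hpy : p < y) (hyx : y ≤ x + 1)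
    (hP : {p, y, x + 3} ∈ 𝒞) :
    ∃ R ∈ 𝒞, 4 ≤ cycDiameter n R ∧ R ⊆ Finset.Icc p (x + 2) := by
  have hPb := fun t (ht : t ∈ ({p, y, x + 3} : Finset ℕ)) => Finset.mem_Icc.1 ((h𝒞.1 _ hP).1 ht)
  have hp := hPb p (by simp)
  have hx := hPb (x + 3) (by simp)
  obtain ⟨R, hR, hR4, hLB⟩ := exists_mem_liesBetween_of_cycDiameter_eq_four h𝒞 hno4
    (isKSubset_triple (y := x + 1) (by omega) (by omega) (by omega) hx.2)
    (cycDiameter_triple_eq_four hn (by omega) (by omega) (by omega) hx.2)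
  obtain ⟨hr, he⟩ := mem_of_liesBetween_probe_left hLB
  have hR3 := (h𝒞.1 R hR).2
  refine ⟨R, hR, hR4, fun t ht => Finset.mem_Icc.2 ?_⟩
  by_cases htP : t ∈ ({p, y, x + 3} : Finset ℕ)
  · simp only [Finset.mem_insert, Finset.mem_singleton] at htP
    rcases htP with rfl | rfl | rfl
    · omega
    · omega
    · exact absurd ht he
  by_cases hpyR : p ∈ R ∧ y ∈ R
  · rw [eq_triple_of_mem hR3 hpyR.1 hpyR.2 hr (by omega) (by omega) (by omega)] at ht
    simp only [Finset.mem_insert, Finset.mem_singleton] at ht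
    omega
  obtain ⟨u, hu, hpu, hux⟩ : ∃ u ∈ ({p, y, x + 3} : Finset ℕ) \ R, p ≤ u ∧ u < x + 2 := by
    rcases not_and_or.1 hpyR with h | h
    · exact ⟨p, by simp [h], le_rfl, by omega⟩
    · exact ⟨y, by simp [h], by omega, by omega⟩
  have := lt_and_lt_of_weaklySeparated (h𝒞.2.1 R hR _ hP) (hR3.trans (h𝒞.1 _ hP).2.symm) hu
    (Finset.mem_sdiff.2 ⟨hr, by simp; omega⟩) (Finset.mem_sdiff.2 ⟨by simp, he⟩) hux
    (by omega) t (Finset.mem_sdiff.2 ⟨ht, htP⟩)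
  omega

theorem exists_mem_subset_Icc_drop_min (h𝒞 : MaximalWS n 3 𝒞) (hn : 5 ≤ n)
    (hno4 : ∀ I ∈ 𝒞, cycDiameter n I ≠ 4) {x y q : ℕ} (hxy : x + 2 ≤ y) (hyq : y < q)
    (hP : {x, y, q} ∈ 𝒞) :
    ∃ R ∈ 𝒞, 4 ≤ cycDiameter n R ∧ R ⊆ Finset.Icc (x + 1) q := by
  have hPb := fun t (ht : t ∈ ({x, y, q} : Finset ℕ)) => Finset.mem_Icc.1 ((h𝒞.1 _ hP).1 ht)
  have hx := hPb x (by simp)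
  have hq := hPb q (by simp)
  obtain ⟨R, hR, hR4, hLB⟩ := exists_mem_liesBetween_of_cycDiameter_eq_four h𝒞 hno4
    (isKSubset_triple (y := x + 2) hx.1 (by omega) (by omega) (by omega))
    (cycDiameter_triple_eq_four hn hx.1 (by omega) (by omega) (by omega))
  obtain ⟨hr, he⟩ := mem_of_liesBetween_probe_right hLB
  have hR3 := (h𝒞.1 R hR).2
  refine ⟨R, hR, hR4, fun t ht => Finset.mem_Icc.2 ?_⟩
  by_cases htP : t ∈ ({x, y, q} : Finset ℕ)
  · simp only [Finset.mem_insert, Finset.mem_singleton] at htP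
    rcases htP with rfl | rfl | rfl
    · exact absurd ht he
    · omega
    · omega
  by_cases hyqR : y ∈ R ∧ q ∈ R
  · rw [eq_triple_of_mem hR3 hr hyqR.1 hyqR.2 (by omega) (by omega) (by omega)] at ht
    simp only [Finset.mem_insert, Finset.mem_singleton] at ht
    omega
  obtain ⟨u, hu, hxu, huq⟩ : ∃ u ∈ ({x, y, q} : Finset ℕ) \ R, x + 1 < u ∧ u ≤ q := by
    rcases not_and_or.1 hyqR with h | h
    · exact ⟨y, by simp [h], by omega, by omega⟩
    · exact ⟨q, by simp [h], by omega, le_rfl⟩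
  have := lt_and_lt_of_weaklySeparated (h𝒞.2.1 R hR _ hP) (hR3.trans (h𝒞.1 _ hP).2.symm)
    (Finset.mem_sdiff.2 ⟨by simp, he⟩) (Finset.mem_sdiff.2 ⟨hr, by simp; omega⟩) hu
    (by omega) hxu t (Finset.mem_sdiff.2 ⟨ht, htP⟩)
  omega

theorem exists_mem_subset_Icc_shorter (h𝒞 : MaximalWS n 3 𝒞) (hn : 5 ≤ n)
    (hno4 : ∀ I ∈ 𝒞, cycDiameter n I ≠ 4) {P : Finset ℕ} (hP : P ∈ 𝒞)
    (hP4 : 4 ≤ cycDiameter n P) {a l : ℕ} (hPa : P ⊆ Finset.Icc a (a + (l + 1))) :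
    ∃ R ∈ 𝒞, 4 ≤ cycDiameter n R ∧ ∃ a', R ⊆ Finset.Icc a' (a' + l) := by
  have hPb := fun t (ht : t ∈ P) => Finset.mem_Icc.1 (hPa ht)
  by_cases ha : a ∈ P
  swap
  · refine ⟨P, hP, hP4, a + 1, fun t ht => Finset.mem_Icc.2 ?_⟩
    have := hPb t ht
    have : t ≠ a := fun h => ha (h ▸ ht)
    omega
  by_cases hb : a + (l + 1) ∈ P
  swap
  · refine ⟨P, hP, hP4, a, fun t ht => Finset.mem_Icc.2 ?_⟩
    have := hPb t ht
    have : t ≠ a + (l + 1) := fun h => hb (h ▸ ht)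
    omega
  have hP3 := h𝒞.1 P hP
  obtain ⟨y, hyP, hy⟩ := Finset.exists_mem_notMem_of_card_lt_card
    (s := {a, a + (l + 1)}) (t := P) (Finset.card_le_two.trans_lt (by rw [hP3.2]; norm_num))
  simp only [Finset.mem_insert, Finset.mem_singleton, not_or] at hy
  have hyb := hPb y hyP
  rw [eq_triple_of_mem hP3.2 ha hyP hb (Ne.symm hy.1) (by omega) hy.2] at hP
  rcases (by omega : y + 1 < a + (l + 1) ∨ a + 2 ≤ y ∨ (y = a + 1 ∧ l = 1)) with h | h | ⟨rfl, rfl⟩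
  · obtain ⟨x, hx⟩ : ∃ x, a + (l + 1) = x + 3 := ⟨a + l - 2, by omega⟩
    rw [hx] at hP
    obtain ⟨R, hR, hR4, hRa⟩ := exists_mem_subset_Icc_drop_max h𝒞 hn hno4 (by omega) (by omega) hP
    exact ⟨R, hR, hR4, a, hRa.trans (Finset.Icc_subset_Icc le_rfl (by omega))⟩
  · obtain ⟨R, hR, hR4, hRa⟩ := exists_mem_subset_Icc_drop_min h𝒞 hn hno4 h (by omega) hP
    exact ⟨R, hR, hR4, a + 1, hRa.trans (Finset.Icc_subset_Icc le_rfl (by omega))⟩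
  · have ha1 := Finset.mem_Icc.1 (hP3.1 ha)
    have hbn := Finset.mem_Icc.1 (hP3.1 hb)
    have := cycDiameter_le_of_subset_Icc (n := n) ha1.1 (by omega) hbn.2 hPa
    omega

theorem not_subset_Icc_of_four_le_cycDiameter (h𝒞 : MaximalWS n 3 𝒞) (hn : 5 ≤ n)
    (hno4 : ∀ I ∈ 𝒞, cycDiameter n I ≠ 4) (l : ℕ) :
    ∀ a, ∀ P ∈ 𝒞, 4 ≤ cycDiameter n P → ¬P ⊆ Finset.Icc a (a + l) := by
  induction l with
  | zero =>
    intro a P hP _ hPa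
    have := Finset.card_le_card hPa
    rw [(h𝒞.1 P hP).2, Nat.add_zero, Finset.Icc_self, Finset.card_singleton] at this
    omega
  | succ l ih =>
    intro a P hP hP4 hPa
    obtain ⟨R, hR, hR4, a', hRa'⟩ := exists_mem_subset_Icc_shorter h𝒞 hn hno4 hP hP4 hPa
    exact ih a' R hR hR4 hRa'

end NoAlmostBoundary

theorem exists_mem_cycDiameter_eq_four {n : ℕ} {𝒞 : Finset (Finset ℕ)} (hn : 5 ≤ n)
    (h𝒞 : MaximalWS n 3 𝒞) : ∃ I ∈ 𝒞, cycDiameter n I = 4 := by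
  by_contra! hno4
  obtain ⟨R, hR, hR4, -⟩ := exists_mem_liesBetween_of_cycDiameter_eq_four h𝒞 hno4
    (isKSubset_triple (x := 1) (y := 2) (z := 1 + 3) le_rfl (by omega) (by omega) (by omega))
    (cycDiameter_triple_eq_four hn le_rfl (by omega) (by omega) (by omega))
  refine not_subset_Icc_of_four_le_cycDiameter h𝒞 hn hno4 (n - 1) 1 R hR hR4 ?_
  rw [show 1 + (n - 1) = n by omega]
  exact (h𝒞.1 R hR).1

/-- An alternative `x + n = a + k` records the point `a + k` wrapped around past `n`. -/
theorem exists_eq_of_cycDiameter_eq_four {n : ℕ} {I : Finset ℕ} (hI : IsKSubset n 3 I)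
    (hI4 : cycDiameter n I = 4) :
    ∃ a w e, I = {a, w, e} ∧ 4 ≤ n ∧
      a ∈ Finset.Icc 1 n ∧ w ∈ Finset.Icc 1 n ∧ e ∈ Finset.Icc 1 n ∧ (e = a + 3 ∨ e + n = a + 3) ∧
      ((w = a + 1 ∨ w + n = a + 1) ∨ (w = a + 2 ∨ w + n = a + 2)) := by
  have hn : 0 < n := hI.pos (by norm_num)
  obtain ⟨hdn, a, ha, hsub⟩ := exists_subset_cycInterval_cycDiameter hn hI.1
  rw [hI4] at hsub hdn
  have ha' := Finset.mem_Icc.1 ha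
  have hmem : ∀ x ∈ I, 1 ≤ x ∧ x ≤ n ∧ (a ≤ x ∧ x < a + 4 ∨ x + n < a + 4) := fun x hx =>
    (mem_cycInterval_iff ha'.1 ha'.2 hdn).1 (hsub hx)
  have hshort : ∀ b ∈ Finset.Icc 1 n, ¬I ⊆ cycInterval n b 3 := fun b hb hb3 => by
    have := cycDiameter_le hb hb3
    omega
  have haI : a ∈ I := by
    by_contra haI
    obtain ⟨b, hb, hab⟩ : ∃ b ∈ Finset.Icc 1 n, b = a + 1 ∨ b + n = a + 1 := by
      rcases lt_or_eq_of_le ha'.2 with h | h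
      · exact ⟨a + 1, Finset.mem_Icc.2 ⟨by omega, h⟩, Or.inl rfl⟩
      · exact ⟨1, Finset.mem_Icc.2 ⟨le_rfl, hn⟩, Or.inr (by omega)⟩
    have hb' := Finset.mem_Icc.1 hb
    refine hshort b hb fun x hx => (mem_cycInterval_iff hb'.1 hb'.2 (by omega)).2 ?_
    have : x ≠ a := fun h => haI (h ▸ hx)
    have := hmem x hx
    omega
  obtain ⟨e, he, hae⟩ : ∃ e ∈ Finset.Icc 1 n, e = a + 3 ∨ e + n = a + 3 := by
    rcases le_or_gt (a + 3) n with h | h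
    · exact ⟨a + 3, Finset.mem_Icc.2 ⟨by omega, h⟩, Or.inl rfl⟩
    · exact ⟨a + 3 - n, Finset.mem_Icc.2 ⟨by omega, by omega⟩, Or.inr (by omega)⟩
  have he' := Finset.mem_Icc.1 he
  have heI : e ∈ I := by
    by_contra heI
    refine hshort a ha fun x hx => (mem_cycInterval_iff ha'.1 ha'.2 (by omega)).2 ?_
    have : x ≠ e := fun h => heI (h ▸ hx)
    have := hmem x hx
    omega
  obtain ⟨w, hwI, hw⟩ := Finset.exists_mem_notMem_of_card_lt_card
    (s := {a, e}) (t := I) (Finset.card_le_two.trans_lt (by rw [hI.2]; norm_num))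
  simp only [Finset.mem_insert, Finset.mem_singleton, not_or] at hw
  have := hmem w hwI
  refine ⟨a, w, e, eq_triple_of_mem hI.2 haI hwI heI (Ne.symm hw.1) (by omega) hw.2,
    hdn, ha, Finset.mem_Icc.2 ⟨this.1, this.2.1⟩, he, hae, by omega⟩

theorem exists_dihedralMap_image_eq {n : ℕ} {I : Finset ℕ} (hI : IsKSubset n 3 I)
    (hI4 : cycDiameter n I = 4) :
    ∃ g : ℕ → ℕ, DihedralMap n g ∧ I.image g = {1, n - 2, n - 1} := by
  obtain ⟨a, w, e, rfl, hn, ha, hwb, heb, he, hw⟩ := exists_eq_of_cycDiameter_eq_four hI hI4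
  rw [Finset.mem_Icc] at ha hwb heb
  rcases hw with hw | hw
  · obtain ⟨r, hr, har⟩ : ∃ r < n, a + r = n - 2 ∨ a + r = 2 * n - 2 := by
      rcases le_or_gt a (n - 2) with h | h
      · exact ⟨n - 2 - a, by omega, Or.inl (by omega)⟩
      · exact ⟨2 * n - 2 - a, by omega, Or.inr (by omega)⟩
    refine ⟨fun x => (x - 1 + r) % n + 1, ⟨r, hr, Or.inl fun _ => rfl⟩, ?_⟩
    have h₁ : (a - 1 + r) % n + 1 = n - 2 := by
      have := mod_eq_or_eq_sub (X := a - 1 + r) (n := n) (by omega)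
      omega
    have h₂ : (w - 1 + r) % n + 1 = n - 1 := by
      have := mod_eq_or_eq_sub (X := w - 1 + r) (n := n) (by omega)
      omega
    have h₃ : (e - 1 + r) % n + 1 = 1 := by
      have := mod_eq_or_eq_sub (X := e - 1 + r) (n := n) (by omega)
      omega
    simp only [Finset.image_insert, Finset.image_singleton, h₁, h₂, h₃]
    ext t
    simp only [Finset.mem_insert, Finset.mem_singleton]
    omega
  · obtain ⟨r, hr, har⟩ : ∃ r < n, r = a ∨ r + n = a := by
      rcases lt_or_eq_of_le ha.2 with h | h
      · exact ⟨a, h, Or.inl rfl⟩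
      · exact ⟨0, by omega, Or.inr (by omega)⟩
    refine ⟨fun x => (n - x + r) % n + 1, ⟨r, hr, Or.inr fun _ => rfl⟩, ?_⟩
    have h₁ : (n - a + r) % n + 1 = 1 := by
      have := mod_eq_or_eq_sub (X := n - a + r) (n := n) (by omega)
      omega
    have h₂ : (n - w + r) % n + 1 = n - 1 := by
      have := mod_eq_or_eq_sub (X := n - w + r) (n := n) (by omega)
      omega
    have h₃ : (n - e + r) % n + 1 = n - 2 := by
      have := mod_eq_or_eq_sub (X := n - e + r) (n := n) (by omega)
      omega
    simp only [Finset.image_insert, Finset.image_singleton, h₁, h₂, h₃]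
    ext t
    simp only [Finset.mem_insert, Finset.mem_singleton]
    omega

/-- Every maximal collection of pairwise weakly separated `3`-subsets of `{1,…,n}`
contains an almost boundary `3`-subset (one of diameter `4`); equivalently, some
dihedral translate of the collection contains `{1, n−2, n−1}`. -/
theorem exists_almost_boundary (n : ℕ) (hn : 5 ≤ n) (𝒞 : Finset (Finset ℕ))
    (h𝒞 : MaximalWS n 3 𝒞) :
    (∃ I ∈ 𝒞, cycDiameter n I = 4) ∧
    (∃ g : ℕ → ℕ, DihedralMap n g ∧
      ∃ I ∈ 𝒞, I.image g = ({1, n - 2, n - 1} : Finset ℕ)) := by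
  obtain ⟨I, hI, hI4⟩ := exists_mem_cycDiameter_eq_four hn h𝒞
  obtain ⟨g, hg, hgI⟩ := exists_dihedralMap_image_eq (h𝒞.1 I hI) hI4
  exact ⟨⟨I, hI, hI4⟩, g, hg, I, hI, hgI⟩
end

section
/- Let n ≥ 5 and let 𝒞 be a maximal collection of pairwise weakly separated 3-element subsets of {1,…,n} with {1, n−2, n−1} ∈ 𝒞. Then there exists a unique index b with 1 < b < n−1 such that both {1, b, n−1} and {1, b, n} belong to 𝒞 (the pinch point of 𝒞 over n and n−1). -/
lemma card_triple {a b c : ℕ} (hab : a ≠ b) (hac : a ≠ c) (hbc : b ≠ c) :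
    ({a, b, c} : Finset ℕ).card = 3 := by
  rw [Finset.card_insert_of_notMem (by simp [hab, hac]),
      Finset.card_insert_of_notMem (by simp [hbc]), Finset.card_singleton]

/-- A crossing pattern `p < q < r < s` with `p, r ∈ J \ I` and `q, s ∈ I \ J`
forbids weak separation. -/
lemma crossing_not_ws {I J : Finset ℕ} {p q r s : ℕ}
    (hp : p ∈ J) (hp' : p ∉ I) (hq : q ∈ I) (hq' : q ∉ J)
    (hr : r ∈ J) (hr' : r ∉ I) (hs : s ∈ I) (hs' : s ∉ J)
    (h1 : p < q) (h2 : q < r) (h3 : r < s) : ¬ WeaklySeparated I J := by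
  rintro (⟨-, J₁, J₂, -, hu, hJ1, hJ2⟩ | ⟨-, I₁, I₂, -, hu, hI1, hI2⟩)
  · have hrm : r ∈ J₁ ∪ J₂ := hu ▸ Finset.mem_sdiff.mpr ⟨hr, hr'⟩
    rcases Finset.mem_union.mp hrm with h | h
    · exact absurd (hJ1 r h q (Finset.mem_sdiff.mpr ⟨hq, hq'⟩)) (by omega)
    · exact absurd (hJ2 s (Finset.mem_sdiff.mpr ⟨hs, hs'⟩) r h) (by omega)
  · have hqm : q ∈ I₁ ∪ I₂ := hu ▸ Finset.mem_sdiff.mpr ⟨hq, hq'⟩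
    rcases Finset.mem_union.mp hqm with h | h
    · exact absurd (hI1 q h p (Finset.mem_sdiff.mpr ⟨hp, hp'⟩)) (by omega)
    · exact absurd (hI2 r (Finset.mem_sdiff.mpr ⟨hr, hr'⟩) q h) (by omega)

/-- The mirrored crossing pattern `p < q < r < s` with `p, r ∈ I \ J` and
`q, s ∈ J \ I` also forbids weak separation. -/
lemma crossing_not_ws' {I J : Finset ℕ} {p q r s : ℕ}
    (hp : p ∈ I) (hp' : p ∉ J) (hq : q ∈ J) (hq' : q ∉ I)
    (hr : r ∈ I) (hr' : r ∉ J) (hs : s ∈ J) (hs' : s ∉ I)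
    (h1 : p < q) (h2 : q < r) (h3 : r < s) : ¬ WeaklySeparated I J :=
  fun h => crossing_not_ws hp hp' hq hq' hr hr' hs hs' h1 h2 h3 (ws_symm h)

/-- Build weak separation from a splitting predicate on `J \ I`. -/
lemma ws_construct {I J : Finset ℕ} (hc : J.card ≤ I.card) (P : ℕ → Prop) [DecidablePred P]
    (h1 : ∀ x ∈ J, x ∉ I → P x → ∀ e ∈ I, e ∉ J → x < e)
    (h2 : ∀ x ∈ J, x ∉ I → ¬ P x → ∀ e ∈ I, e ∉ J → e < x) : WeaklySeparated I J := by
  left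
  refine ⟨hc, (J \ I).filter P, (J \ I).filter (fun x => ¬ P x),
    Finset.disjoint_filter_filter_not _ _ _, Finset.filter_union_filter_not_eq _ _, ?_, ?_⟩
  · intro x hx e he
    obtain ⟨hx1, hx2⟩ := Finset.mem_filter.mp hx
    obtain ⟨hxJ, hxI⟩ := Finset.mem_sdiff.mp hx1
    obtain ⟨heI, heJ⟩ := Finset.mem_sdiff.mp he
    exact h1 x hxJ hxI hx2 e heI heJ
  · intro e he x hx
    obtain ⟨hx1, hx2⟩ := Finset.mem_filter.mp hx
    obtain ⟨hxJ, hxI⟩ := Finset.mem_sdiff.mp hx1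
    obtain ⟨heI, heJ⟩ := Finset.mem_sdiff.mp he
    exact h2 x hxJ hxI hx2 e heI heJ

/-- From failure of weak separation (equal cards) extract two "sandwich" witnesses. -/
lemma not_ws_extract {I J : Finset ℕ} (hc : J.card ≤ I.card) (hc2 : I.card ≤ J.card)
    (h : ¬ WeaklySeparated I J) :
    (∃ x e e', x ∈ J ∧ x ∉ I ∧ e ∈ I ∧ e ∉ J ∧ e' ∈ I ∧ e' ∉ J ∧ e' < x ∧ x < e) ∧
    (∃ y p p', y ∈ I ∧ y ∉ J ∧ p ∈ J ∧ p ∉ I ∧ p' ∈ J ∧ p' ∉ I ∧ p < y ∧ y < p') := by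
  classical
  constructor
  · by_contra hno
    push_neg at hno
    apply h
    left
    refine ⟨hc, (J \ I).filter (fun x => ∀ e ∈ I \ J, x < e),
      (J \ I).filter (fun x => ¬ ∀ e ∈ I \ J, x < e),
      Finset.disjoint_filter_filter_not _ _ _, Finset.filter_union_filter_not_eq _ _, ?_, ?_⟩
    · intro x hx e he
      exact (Finset.mem_filter.mp hx).2 e he
    · intro e he x hx
      obtain ⟨heI, heJ⟩ := Finset.mem_sdiff.mp he
      obtain ⟨hx1, hx2⟩ := Finset.mem_filter.mp hx
      obtain ⟨hxJ, hxI⟩ := Finset.mem_sdiff.mp hx1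
      push_neg at hx2
      obtain ⟨e', he', hle⟩ := hx2
      obtain ⟨he'I, he'J⟩ := Finset.mem_sdiff.mp he'
      by_contra hlt
      push_neg at hlt
      have hxe : x < e := by
        rcases lt_or_eq_of_le hlt with h' | h'
        · exact h'
        · exact absurd (h' ▸ heI) hxI
      have he'x : e' < x := by
        rcases lt_or_eq_of_le hle with h' | h'
        · exact h'
        · exact absurd (h' ▸ hxJ) he'J
      exact absurd hxe (by have := hno x e e' hxJ hxI heI heJ he'I he'J he'x; omega)
  · by_contra hno
    push_neg at hno
    apply h
    right
    refine ⟨hc2, (I \ J).filter (fun y => ∀ p ∈ J \ I, y < p),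
      (I \ J).filter (fun y => ¬ ∀ p ∈ J \ I, y < p),
      Finset.disjoint_filter_filter_not _ _ _, Finset.filter_union_filter_not_eq _ _, ?_, ?_⟩
    · intro y hy p hp
      exact (Finset.mem_filter.mp hy).2 p hp
    · intro p hp y hy
      obtain ⟨hpJ, hpI⟩ := Finset.mem_sdiff.mp hp
      obtain ⟨hy1, hy2⟩ := Finset.mem_filter.mp hy
      obtain ⟨hyI, hyJ⟩ := Finset.mem_sdiff.mp hy1
      push_neg at hy2
      obtain ⟨p', hp', hle⟩ := hy2
      obtain ⟨hp'J, hp'I⟩ := Finset.mem_sdiff.mp hp'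
      by_contra hlt
      push_neg at hlt
      have hyp : y < p := by
        rcases lt_or_eq_of_le hlt with h' | h'
        · exact h'
        · exact absurd (h' ▸ hpJ) hyJ
      have hp'y : p' < y := by
        rcases lt_or_eq_of_le hle with h' | h'
        · exact h'
        · exact absurd (h' ▸ hyI) hp'I
      exact absurd hyp (by have := hno y p' p hyI hyJ hp'J hp'I hpJ hpI hp'y; omega)

/-- **Pinch point lemma.** If a maximal collection of pairwise weakly separated
`3`-subsets of `{1,…,n}` contains `{1, n−2, n−1}`, then there is a unique index `b`
with `1 < b < n−1` such that both `{1,b,n−1}` and `{1,b,n}` belong to the collection. -/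
theorem exists_unique_pinch_point (n : ℕ) (hn : 5 ≤ n) (𝒞 : Finset (Finset ℕ))
    (h𝒞 : MaximalWS n 3 𝒞) (hmem : ({1, n - 2, n - 1} : Finset ℕ) ∈ 𝒞) :
    ∃! b : ℕ, 1 < b ∧ b < n - 1 ∧
      ({1, b, n - 1} : Finset ℕ) ∈ 𝒞 ∧ ({1, b, n} : Finset ℕ) ∈ 𝒞 := by
  classical
  obtain ⟨hsub, hpair, hmax⟩ := h𝒞
  have hbd : ∀ I ∈ 𝒞, ∀ z ∈ I, 1 ≤ z ∧ z ≤ n := by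
    intro I hI z hz
    exact Finset.mem_Icc.mp ((hsub I hI).1 hz)
  -- Step 1 : {1,2,n} ∈ 𝒞
  have h12n : ({1, 2, n} : Finset ℕ) ∈ 𝒞 := by
    apply hmax
    · constructor
      · intro z hz
        simp only [Finset.mem_insert, Finset.mem_singleton] at hz
        rw [Finset.mem_Icc]
        rcases hz with rfl | rfl | rfl <;> omega
      · exact card_triple (by omega) (by omega) (by omega)
    · intro I hI
      apply ws_construct (P := fun x => x ≤ 2)
      · rw [(hsub I hI).2, card_triple (by omega : (1:ℕ) ≠ 2) (by omega) (by omega)]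
      · intro x hx hxI hP e heI heJ
        simp only [Finset.mem_insert, Finset.mem_singleton, not_or] at heJ
        have := hbd I hI e heI
        omega
      · intro x hx hxI hP e heI heJ
        simp only [Finset.mem_insert, Finset.mem_singleton] at hx
        simp only [Finset.mem_insert, Finset.mem_singleton, not_or] at heJ
        have := hbd I hI e heI
        omega
  -- Step 2 : β = largest b in (1, n-1) with {1, b, n} ∈ 𝒞
  have hne : ((Finset.Ioo 1 (n-1)).filter (fun b => ({1, b, n} : Finset ℕ) ∈ 𝒞)).Nonempty :=
    ⟨2, Finset.mem_filter.mpr ⟨Finset.mem_Ioo.mpr ⟨by omega, by omega⟩, h12n⟩⟩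
  set β := ((Finset.Ioo 1 (n-1)).filter (fun b => ({1, b, n} : Finset ℕ) ∈ 𝒞)).max' hne with hβdef
  have hβmem := Finset.max'_mem _ hne
  rw [Finset.mem_filter, Finset.mem_Ioo] at hβmem
  obtain ⟨⟨hβ1, hβ2⟩, hβn⟩ := hβmem
  have hβmax : ∀ b, 1 < b → b < n - 1 → ({1, b, n} : Finset ℕ) ∈ 𝒞 → b ≤ β := by
    intro b h h' h''
    exact Finset.le_max' _ b (Finset.mem_filter.mpr ⟨Finset.mem_Ioo.mpr ⟨h, h'⟩, h''⟩)
  -- Step 3 : every member containing n contains 1 or n-1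
  have hL5 : ∀ I ∈ 𝒞, n ∈ I → 1 ∈ I ∨ n - 1 ∈ I := by
    intro I hI hnI
    by_contra hcon
    push_neg at hcon
    obtain ⟨h1I, hn1I⟩ := hcon
    have hIcard := (hsub I hI).2
    have hxne : (I \ {n, n - 2}).Nonempty := by
      rw [← Finset.card_pos]
      have h1 : I.card ≤ (I \ ({n, n - 2} : Finset ℕ)).card + ({n, n - 2} : Finset ℕ).card :=
        Finset.card_le_card_sdiff_add_card
      have h2 : ({n, n - 2} : Finset ℕ).card ≤ 2 := by
        apply le_trans (Finset.card_insert_le _ _)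
        simp
      omega
    obtain ⟨x, hx⟩ := hxne
    rw [Finset.mem_sdiff] at hx
    obtain ⟨hxI, hx2⟩ := hx
    simp only [Finset.mem_insert, Finset.mem_singleton, not_or] at hx2
    have hxb := hbd I hI x hxI
    have hx1 : x ≠ 1 := fun h => h1I (h ▸ hxI)
    have hxn1 : x ≠ n - 1 := fun h => hn1I (h ▸ hxI)
    refine crossing_not_ws (I := I) (J := ({1, n-2, n-1} : Finset ℕ))
      (p := 1) (q := x) (r := n-1) (s := n) ?_ h1I hxI ?_ ?_ hn1I hnI ?_
      (by omega) (by omega) (by omega) (hpair I hI _ hmem)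
    · simp
    · simp only [Finset.mem_insert, Finset.mem_singleton, not_or]
      omega
    · simp
    · simp only [Finset.mem_insert, Finset.mem_singleton, not_or]
      omega
  -- Step 4 : {1, β, n-1} is weakly separated from everything in 𝒞
  have hJcard : ({1, β, n-1} : Finset ℕ).card = 3 :=
    card_triple (by omega) (by omega) (by omega)
  have key : ∀ I ∈ 𝒞, WeaklySeparated I ({1, β, n-1} : Finset ℕ) := by
    intro I hI
    by_contra hnws
    have hIcard := (hsub I hI).2
    obtain ⟨⟨x, e, e', hxJ, hxI, heI, heJ, he'I, he'J, ha1, ha2⟩,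
            ⟨y, p, p', hyI, hyJ, hpJ, hpI, hp'J, hp'I, hb1, hb2⟩⟩ :=
      not_ws_extract (le_of_eq (hJcard.trans hIcard.symm))
        (le_of_eq (hIcard.trans hJcard.symm)) hnws
    simp only [Finset.mem_insert, Finset.mem_singleton] at hxJ hpJ hp'J
    simp only [Finset.mem_insert, Finset.mem_singleton, not_or] at heJ he'J hyJ
    have heb := hbd I hI e heI
    have he'b := hbd I hI e' he'I
    have hyb := hbd I hI y hyI
    rcases hxJ with rfl | rfl | rfl
    · omega
    · -- x = β
      by_cases hnI : n ∈ I
      · rcases hL5 I hI hnI with h1I | hn1I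
        · -- 1 ∈ I : then I = {1, e', n}
          have hIeq : ({1, e', n} : Finset ℕ) = I := by
            apply Finset.eq_of_subset_of_card_le
            · intro z hz
              simp only [Finset.mem_insert, Finset.mem_singleton] at hz
              rcases hz with rfl | rfl | rfl <;> assumption
            · rw [hIcard, card_triple (by omega) (by omega) (by omega)]
          have hpne : p ≠ 1 := fun h => hpI (h ▸ h1I)
          have hp'ne : p' ≠ 1 := fun h => hp'I (h ▸ h1I)
          have hy2 : β < y ∧ y < n - 1 := by
            rcases hpJ with rfl | rfl | rfl <;> rcases hp'J with rfl | rfl | rfl <;> omega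
          rw [← hIeq] at hyI
          simp only [Finset.mem_insert, Finset.mem_singleton] at hyI
          omega
        · -- n-1 ∈ I : then I = {e', n-1, n}, contradiction with {1, n-2, n-1}
          have hIeq : ({e', n-1, n} : Finset ℕ) = I := by
            apply Finset.eq_of_subset_of_card_le
            · intro z hz
              simp only [Finset.mem_insert, Finset.mem_singleton] at hz
              rcases hz with rfl | rfl | rfl <;> assumption
            · rw [hIcard, card_triple (by omega) (by omega) (by omega)]
          refine crossing_not_ws (I := I) (J := ({1, n-2, n-1} : Finset ℕ))
            (p := 1) (q := e') (r := n-2) (s := n) ?_ ?_ he'I ?_ ?_ ?_ hnI ?_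
            (by omega) (by omega) (by omega) (hpair I hI _ hmem)
          · simp
          · rw [← hIeq]
            simp only [Finset.mem_insert, Finset.mem_singleton, not_or]
            omega
          · simp only [Finset.mem_insert, Finset.mem_singleton, not_or]
            omega
          · simp
          · rw [← hIeq]
            simp only [Finset.mem_insert, Finset.mem_singleton, not_or]
            omega
          · simp only [Finset.mem_insert, Finset.mem_singleton, not_or]
            omega
      · -- n ∉ I : crossing e' < β < e < n with {1, β, n}
        refine crossing_not_ws' (I := I) (J := ({1, β, n} : Finset ℕ))
          (p := e') (q := β) (r := e) (s := n) he'I ?_ ?_ hxI heI ?_ ?_ hnI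
          (by omega) (by omega) ?_ (hpair I hI _ hβn)
        · simp only [Finset.mem_insert, Finset.mem_singleton, not_or]
          omega
        · simp
        · simp only [Finset.mem_insert, Finset.mem_singleton, not_or]
          have : e ≠ n := fun h => hnI (h ▸ heI)
          omega
        · simp
        · have : e ≠ n := fun h => hnI (h ▸ heI)
          omega
    · -- x = n-1
      have hnI : n ∈ I := by
        have : e = n := by omega
        exact this ▸ heI
      have h1I : 1 ∈ I := by
        rcases hL5 I hI hnI with h | h
        · exact h
        · exact absurd h hxI
      have hpne : p ≠ 1 := fun h => hpI (h ▸ h1I)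
      have hp'ne : p' ≠ 1 := fun h => hp'I (h ▸ h1I)
      have hy2 : β < y ∧ y < n - 1 := by
        rcases hpJ with rfl | rfl | rfl <;> rcases hp'J with rfl | rfl | rfl <;> omega
      have hIeq : ({1, y, n} : Finset ℕ) = I := by
        apply Finset.eq_of_subset_of_card_le
        · intro z hz
          simp only [Finset.mem_insert, Finset.mem_singleton] at hz
          rcases hz with rfl | rfl | rfl <;> assumption
        · rw [hIcard, card_triple (by omega) (by omega) (by omega)]
      have : ({1, y, n} : Finset ℕ) ∈ 𝒞 := hIeq ▸ hI
      have := hβmax y (by omega) (by omega) this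
      omega
  -- Step 5 : {1, β, n-1} ∈ 𝒞
  have hβn1 : ({1, β, n-1} : Finset ℕ) ∈ 𝒞 := by
    apply hmax
    · constructor
      · intro z hz
        simp only [Finset.mem_insert, Finset.mem_singleton] at hz
        rw [Finset.mem_Icc]
        rcases hz with rfl | rfl | rfl <;> omega
      · exact hJcard
    · exact key
  -- Step 6 : conclusion
  have hcross2 : ∀ b b', 1 < b → b < n - 1 → 1 < b' → b' < n - 1 → b < b' →
      ({1, b, n-1} : Finset ℕ) ∈ 𝒞 → ({1, b', n} : Finset ℕ) ∈ 𝒞 → False := by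
    intro b b' hb1 hb2 hb'1 hb'2 hlt hbm hb'm
    refine crossing_not_ws' (I := ({1, b, n-1} : Finset ℕ)) (J := ({1, b', n} : Finset ℕ))
      (p := b) (q := b') (r := n-1) (s := n) ?_ ?_ ?_ ?_ ?_ ?_ ?_ ?_
      (by omega) (by omega) (by omega) (hpair _ hbm _ hb'm)
    · simp
    · simp only [Finset.mem_insert, Finset.mem_singleton, not_or]; omega
    · simp
    · simp only [Finset.mem_insert, Finset.mem_singleton, not_or]; omega
    · simp
    · simp only [Finset.mem_insert, Finset.mem_singleton, not_or]; omega
    · simp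
    · simp only [Finset.mem_insert, Finset.mem_singleton, not_or]; omega
  refine ⟨β, ⟨hβ1, hβ2, hβn1, hβn⟩, ?_⟩
  intro b hb
  obtain ⟨hb1, hb2, hbA, hbB⟩ := hb
  by_contra hne'
  rcases Nat.lt_or_ge b β with h | h
  · exact hcross2 b β hb1 hb2 hβ1 hβ2 h hbA hβn
  · exact hcross2 β b hβ1 hβ2 hb1 hb2 (by omega) hβn1 hbB
end

section
/- Let n ≥ 5 and let 𝒞 be a maximal collection of pairwise weakly separated 3-element subsets of {1,…,n} with {1, n−2, n−1} ∈ 𝒞. Let b be the pinch point of 𝒞, i.e. the unique index with {1, b, n−1} ∈ 𝒞 and {1, b, n} ∈ 𝒞, and assume b > 2. Then there exists an index a with 1 < a < b such that both {1, a, b} and {1, a, n} belong to 𝒞. -/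
lemma card_triple_s17 {x y z : ℕ} (hxy : x ≠ y) (hxz : x ≠ z) (hyz : y ≠ z) :
    ({x, y, z} : Finset ℕ).card = 3 := by
  rw [Finset.card_insert_of_notMem (by simp [hxy, hxz]),
    Finset.card_insert_of_notMem (by simp [hyz]), Finset.card_singleton]

lemma branch_exists {A B : Finset ℕ}
    (h : ∀ t ∈ B, (∀ u ∈ A, t < u) ∨ (∀ u ∈ A, u < t)) :
    ∃ B₁ B₂ : Finset ℕ, Disjoint B₁ B₂ ∧ B₁ ∪ B₂ = B ∧ Prec B₁ A ∧ Prec A B₂ := by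
  classical
  refine ⟨B.filter (fun t => ∀ u ∈ A, t < u), B.filter (fun t => ¬ ∀ u ∈ A, t < u),
    Finset.disjoint_filter_filter_not B B _, Finset.filter_union_filter_not_eq _ B, ?_, ?_⟩
  · intro x hx y hy; exact (Finset.mem_filter.1 hx).2 y hy
  · intro x hx y hy
    obtain ⟨hyB, hy2⟩ := Finset.mem_filter.1 hy
    rcases h y hyB with h' | h'
    · exact absurd h' hy2
    · exact h' x hx

lemma ws_of_pointwise {I J : Finset ℕ} (hc : J.card ≤ I.card)
    (h : ∀ t ∈ J \ I, (∀ u ∈ I \ J, t < u) ∨ (∀ u ∈ I \ J, u < t)) :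
    WeaklySeparated I J := Or.inl ⟨hc, branch_exists h⟩

lemma cross_of_not_ws {I J : Finset ℕ} (h1 : J.card ≤ I.card) (h2 : I.card ≤ J.card)
    (h : ¬ WeaklySeparated I J) :
    (∃ t ∈ J, t ∉ I ∧ ∃ u ∈ I, u ∉ J ∧ ∃ v ∈ I, v ∉ J ∧ u < t ∧ t < v) ∧
    (∃ s ∈ I, s ∉ J ∧ ∃ p ∈ J, p ∉ I ∧ ∃ q ∈ J, q ∉ I ∧ p < s ∧ s < q) := by
  constructor
  · by_contra hc
    apply h
    apply ws_of_pointwise h1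
    intro t ht
    obtain ⟨htJ, htI⟩ := Finset.mem_sdiff.1 ht
    by_contra hd
    push_neg at hd
    obtain ⟨⟨u, hu, hu'⟩, v, hv, hv'⟩ := hd
    obtain ⟨huI, huJ⟩ := Finset.mem_sdiff.1 hu
    obtain ⟨hvI, hvJ⟩ := Finset.mem_sdiff.1 hv
    have hut : u ≠ t := fun h' => htI (h' ▸ huI)
    have hvt : v ≠ t := fun h' => htI (h' ▸ hvI)
    exact hc ⟨t, htJ, htI, u, huI, huJ, v, hvI, hvJ, by omega, by omega⟩
  · by_contra hc
    apply h
    refine Or.inr ⟨h2, branch_exists ?_⟩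
    intro s hs
    obtain ⟨hsI, hsJ⟩ := Finset.mem_sdiff.1 hs
    by_contra hd
    push_neg at hd
    obtain ⟨⟨p, hp, hp'⟩, q, hq, hq'⟩ := hd
    obtain ⟨hpJ, hpI⟩ := Finset.mem_sdiff.1 hp
    obtain ⟨hqJ, hqI⟩ := Finset.mem_sdiff.1 hq
    have hps : p ≠ s := fun h' => hsJ (h' ▸ hpJ)
    have hqs : q ≠ s := fun h' => hsJ (h' ▸ hqJ)
    exact hc ⟨s, hsI, hsJ, p, hpJ, hpI, q, hqJ, hqI, by omega, by omega⟩

lemma ws_kill {I J : Finset ℕ} (h : WeaklySeparated I J)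
    {t u v s p q : ℕ}
    (htJ : t ∈ J) (htI : t ∉ I) (huI : u ∈ I) (huJ : u ∉ J) (hvI : v ∈ I) (hvJ : v ∉ J)
    (hsI : s ∈ I) (hsJ : s ∉ J) (hpJ : p ∈ J) (hpI : p ∉ I) (hqJ : q ∈ J) (hqI : q ∉ I)
    (h1 : u < t) (h2 : t < v) (h3 : p < s) (h4 : s < q) : False := by
  rcases h with ⟨-, J₁, J₂, -, hun, hpr1, hpr2⟩ | ⟨-, I₁, I₂, -, hun, hpr1, hpr2⟩
  · have ht' : t ∈ J₁ ∪ J₂ := by rw [hun]; exact Finset.mem_sdiff.2 ⟨htJ, htI⟩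
    rcases Finset.mem_union.1 ht' with h' | h'
    · have := hpr1 t h' u (Finset.mem_sdiff.2 ⟨huI, huJ⟩); omega
    · have := hpr2 v (Finset.mem_sdiff.2 ⟨hvI, hvJ⟩) t h'; omega
  · have hs' : s ∈ I₁ ∪ I₂ := by rw [hun]; exact Finset.mem_sdiff.2 ⟨hsI, hsJ⟩
    rcases Finset.mem_union.1 hs' with h' | h'
    · have := hpr1 s h' p (Finset.mem_sdiff.2 ⟨hpJ, hpI⟩); omega
    · have := hpr2 q (Finset.mem_sdiff.2 ⟨hqJ, hqI⟩) s h'; omega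

/-- If `𝒞` is a maximal collection of pairwise weakly separated `3`-subsets of
`{1,…,n}` containing `{1, n−2, n−1}` with pinch point `b > 2`, then there exists
`a` with `1 < a < b` such that both `{1,a,b}` and `{1,a,n}` belong to `𝒞`. -/
theorem exists_below_pinch_point (n : ℕ) (hn : 5 ≤ n) (𝒞 : Finset (Finset ℕ))
    (h𝒞 : MaximalWS n 3 𝒞) (hmem : ({1, n - 2, n - 1} : Finset ℕ) ∈ 𝒞)
    (b : ℕ) (hb1 : 1 < b) (hb2 : b < n - 1)
    (hbn1 : ({1, b, n - 1} : Finset ℕ) ∈ 𝒞) (hbn : ({1, b, n} : Finset ℕ) ∈ 𝒞)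
    (hb : 2 < b) :
    ∃ a : ℕ, 1 < a ∧ a < b ∧
      ({1, a, b} : Finset ℕ) ∈ 𝒞 ∧ ({1, a, n} : Finset ℕ) ∈ 𝒞 := by
  classical
  obtain ⟨hsub, hpair, hmax⟩ := h𝒞
  -- Step 1 : {1, 2, n} ∈ 𝒞  (it is weakly separated from every 3-subset)
  have h12n : ({1, 2, n} : Finset ℕ) ∈ 𝒞 := by
    apply hmax
    · refine ⟨?_, card_triple_s17 (by omega) (by omega) (by omega)⟩
      intro x hx
      simp only [Finset.mem_insert, Finset.mem_singleton] at hx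
      rw [Finset.mem_Icc]; omega
    · intro I hI
      apply ws_of_pointwise
        (by rw [(hsub I hI).2, card_triple_s17 (show (1:ℕ) ≠ 2 by omega) (by omega) (by omega)])
      intro t ht
      obtain ⟨htJ, htI⟩ := Finset.mem_sdiff.1 ht
      simp only [Finset.mem_insert, Finset.mem_singleton] at htJ
      have key : ∀ u ∈ I \ ({1, 2, n} : Finset ℕ), 1 ≤ u ∧ u ≤ n ∧ u ≠ 1 ∧ u ≠ 2 ∧ u ≠ n := by
        intro u hu
        obtain ⟨huI, huJ⟩ := Finset.mem_sdiff.1 hu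
        simp only [Finset.mem_insert, Finset.mem_singleton] at huJ
        have := Finset.mem_Icc.1 ((hsub I hI).1 huI)
        exact ⟨this.1, this.2, fun h => huJ (Or.inl h), fun h => huJ (Or.inr (Or.inl h)),
          fun h => huJ (Or.inr (Or.inr h))⟩
      rcases htJ with rfl | rfl | rfl
      · left; intro u hu; have := key u hu; omega
      · left; intro u hu; have := key u hu; omega
      · right; intro u hu; have := key u hu; omega
  -- Step 2 : define a := max of candidates
  set T : Finset ℕ := (Finset.Ioo 1 b).filter (fun c => ({1, c, n} : Finset ℕ) ∈ 𝒞) with hT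
  have h2T : 2 ∈ T := by
    rw [hT, Finset.mem_filter, Finset.mem_Ioo]
    exact ⟨⟨by omega, hb⟩, h12n⟩
  have hTne : T.Nonempty := ⟨2, h2T⟩
  have haT := T.max'_mem hTne
  set a := T.max' hTne with ha
  rw [hT, Finset.mem_filter, Finset.mem_Ioo] at haT
  obtain ⟨⟨ha1, hab⟩, haC⟩ := haT
  have hamax : ∀ c, 1 < c → c < b → ({1, c, n} : Finset ℕ) ∈ 𝒞 → c ≤ a := by
    intro c h1 h2 h3
    apply T.le_max' c
    rw [hT, Finset.mem_filter, Finset.mem_Ioo]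
    exact ⟨⟨h1, h2⟩, h3⟩
  -- The kill lemma K1 : no member avoiding 1 and b straddles b
  have K1 : ∀ I ∈ 𝒞, 1 ∉ I → b ∉ I → ∀ u ∈ I, ∀ v ∈ I, u < b → b < v → False := by
    intro I hI h1I hbI u hu v hv hub hbv
    have hIcc := (hsub I hI).1
    have hu' := Finset.mem_Icc.1 (hIcc hu)
    have hv' := Finset.mem_Icc.1 (hIcc hv)
    have hu1 : u ≠ 1 := fun h => h1I (h ▸ hu)
    by_cases hn1I : (n - 1) ∈ I
    · -- kill with {1, b, n}
      refine ws_kill (hpair I hI _ hbn) (t := b) (u := u) (v := n - 1) (s := u) (p := 1) (q := b)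
        (by simp) hbI hu ?_ hn1I ?_ hu ?_ (by simp) h1I (by simp) hbI hub (by omega) (by omega) hub
      all_goals simp only [Finset.mem_insert, Finset.mem_singleton]; omega
    · -- kill with {1, b, n - 1}
      have hvn1 : v ≠ n - 1 := fun h => hn1I (h ▸ hv)
      by_cases hvn : v < n - 1
      · refine ws_kill (hpair I hI _ hbn1) (t := b) (u := u) (v := v) (s := v) (p := b) (q := n - 1)
          (by simp) hbI hu ?_ hv ?_ hv ?_ (by simp) hbI (by simp) hn1I hub hbv hbv hvn
        all_goals simp only [Finset.mem_insert, Finset.mem_singleton]; omega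
      · -- v = n
        have hveq : v = n := by omega
        refine ws_kill (hpair I hI _ hbn1) (t := b) (u := u) (v := v) (s := u) (p := 1) (q := b)
          (by simp) hbI hu ?_ hv ?_ hu ?_ (by simp) h1I (by simp) hbI hub hbv (by omega) hub
        all_goals simp only [Finset.mem_insert, Finset.mem_singleton]; omega
  -- Step 3 : {1, a, b} ∈ 𝒞
  have habC : ({1, a, b} : Finset ℕ) ∈ 𝒞 := by
    apply hmax
    · refine ⟨?_, card_triple_s17 (by omega) (by omega) (by omega)⟩
      intro x hx
      simp only [Finset.mem_insert, Finset.mem_singleton] at hx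
      rw [Finset.mem_Icc]; omega
    intro I hI
    by_contra hnW
    have hI3 := (hsub I hI).2
    have hIcc := (hsub I hI).1
    have hJ3 : ({1, a, b} : Finset ℕ).card = 3 := card_triple_s17 (by omega) (by omega) (by omega)
    obtain ⟨⟨t, htJ, htI, u, huI, huJ, v, hvI, hvJ, hut, htv⟩,
            s, hsI, hsJ, p, hpJ, hpI, q, hqJ, hqI, hps, hsq⟩ :=
      cross_of_not_ws (by omega) (by omega) hnW
    simp only [Finset.mem_insert, Finset.mem_singleton] at htJ hpJ hqJ
    simp only [Finset.mem_insert, Finset.mem_singleton, not_or] at huJ hvJ hsJ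
    have hu' := Finset.mem_Icc.1 (hIcc huI)
    have hv' := Finset.mem_Icc.1 (hIcc hvI)
    have hs' := Finset.mem_Icc.1 (hIcc hsI)
    -- t ≠ 1
    have ht1 : t = a ∨ t = b := by omega
    by_cases h1I : 1 ∈ I
    · -- Case A : 1 ∈ I, so I = {1, u, v}
      have hp1 : p ≠ 1 := fun h => hpI (h ▸ h1I)
      have hq1 : q ≠ 1 := fun h => hqI (h ▸ h1I)
      have hpa : p = a := by omega
      have hqb : q = b := by omega
      have haI : a ∉ I := hpa ▸ hpI
      have hbI : b ∉ I := hqb ▸ hqI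
      have hIeq : ({1, u, v} : Finset ℕ) = I := by
        apply Finset.eq_of_subset_of_card_le
        · intro x hx
          simp only [Finset.mem_insert, Finset.mem_singleton] at hx
          rcases hx with rfl | rfl | rfl
          · exact h1I
          · exact huI
          · exact hvI
        · rw [hI3, card_triple_s17 (by omega) (by omega) (by omega)]
      have hsuv : s = u ∨ s = v := by
        have : s ∈ ({1, u, v} : Finset ℕ) := hIeq ▸ hsI
        simp only [Finset.mem_insert, Finset.mem_singleton] at this
        omega
      have hnI : v ≠ n → n ∉ I := by
        intro hvne hc
        have : n ∈ ({1, u, v} : Finset ℕ) := hIeq ▸ hc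
        simp only [Finset.mem_insert, Finset.mem_singleton] at this
        omega
      rcases ht1 with hta | htb
      · -- t = a : u < a < v, and s = v with a < v < b
        have hsv : s = v := by omega
        -- so a < v < b; kill with {1, a, n}
        refine ws_kill (hpair I hI _ haC) (t := a) (u := u) (v := v) (s := v) (p := a) (q := n)
          (by simp) haI huI ?_ hvI ?_ hvI ?_ (by simp) haI (by simp) (hnI (by omega))
          (by omega) (by omega) (by omega) (by omega)
        all_goals simp only [Finset.mem_insert, Finset.mem_singleton]; omega
      · -- t = b : u < b < v, s = u with a < u < b
        have hsu : s = u := by omega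
        by_cases hvn : v = n
        · -- I = {1, u, n} with a < u < b : contradicts maximality of a
          have hIn : ({1, u, n} : Finset ℕ) = I := by rw [← hvn]; exact hIeq
          have : u ≤ a := hamax u (by omega) (by omega) (by rw [hIn]; exact hI)
          omega
        · -- kill with {1, b, n}
          refine ws_kill (hpair I hI _ hbn) (t := b) (u := u) (v := v) (s := v) (p := b) (q := n)
            (by simp) hbI huI ?_ hvI ?_ hvI ?_ (by simp) hbI (by simp) (hnI hvn)
            (by omega) (by omega) (by omega) (by omega)
          all_goals simp only [Finset.mem_insert, Finset.mem_singleton]; omega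
    · -- Case B : 1 ∉ I
      have hu1 : u ≠ 1 := fun h => h1I (h ▸ huI)
      rcases ht1 with hta | htb
      · -- t = a
        have haI : a ∉ I := hta ▸ htI
        by_cases hbI : b ∈ I
        · -- kill with {1, a, n}
          refine ws_kill (hpair I hI _ haC) (t := a) (u := u) (v := b) (s := u) (p := 1) (q := a)
            (by simp) haI huI ?_ hbI ?_ huI ?_ (by simp) h1I (by simp) haI
            (by omega) (by omega) (by omega) (by omega)
          all_goals simp only [Finset.mem_insert, Finset.mem_singleton]; omega
        · by_cases hvb : b < v
          · exact K1 I hI h1I hbI u huI v hvI (by omega) hvb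
          · -- v < b
            by_cases hnI : n ∈ I
            · exact K1 I hI h1I hbI u huI n hnI (by omega) (by omega)
            · -- kill with {1, a, n}
              refine ws_kill (hpair I hI _ haC) (t := a) (u := u) (v := v) (s := v) (p := a) (q := n)
                (by simp) haI huI ?_ hvI ?_ hvI ?_ (by simp) haI (by simp) hnI
                (by omega) (by omega) (by omega) (by omega)
              all_goals simp only [Finset.mem_insert, Finset.mem_singleton]; omega
      · -- t = b
        exact K1 I hI h1I (htb ▸ htI) u huI v hvI (by omega) (by omega)
  exact ⟨a, ha1, hab, habC, haC⟩
end
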